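/- arXiv:2002.11580 — 7 statements merged into one kernel-verified Lean document; each statement's English description precedes it below -/
import Mathlib

section
/- Let n > k be positive integers and let B^n = {0,1}^n ⊂ ℝ^n be the Boolean cube. For any k-dimensional affine subspace Γ ⊂ ℝ^n, the number of points a ∈ B^n whose Euclidean distance to Γ is strictly less than (1/4)·n^{-1/2}·(n-k)^{-1/2} is at most 2^{k+1}. -/
/-!
Let `V` be the direction of `Γ` and choose `k` coordinates `σ` for which the `k × k` minor of
a basis matrix of `V` has maximal absolute value. By Cramer's rule every row of that matrix is
a combination of the rows `σ` with coefficients in `[-1, 1]`, so `|v j| ≤ ∑ i, |v (σ i)|` for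
all `v ∈ V`. If two cube points `a, b` are `ε`-close to `Γ` and agree on the coordinates `σ`,
then `a - b` is an element of `V` plus an error `d` with `‖d‖ < 2ε` which cancels it on `σ`;
hence `|a j - b j| ≤ (1 + √k) ‖d‖ < 2 (1 + √k) ε < 1` and `a = b`. So the cube points near `Γ`
are determined by their `σ`-coordinates, and there are at most `2 ^ k` of them.
-/

open Module Matrix

namespace Matrix

variable {ι 𝕜 : Type*} [Field 𝕜] {k : ℕ}

theorem exists_submatrix_det_ne_zero_of_rank_eq [Fintype ι] (M : Matrix ι (Fin k) 𝕜)
    (hM : M.rank = k) :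
    ∃ σ : Fin k → ι, (M.submatrix σ id).det ≠ 0 := by
  obtain ⟨κ, a, ha, hspan, hli⟩ := exists_linearIndependent' 𝕜 M.row
  have : Fintype κ := Fintype.ofInjective a ha
  have hcard : Fintype.card κ = k := by
    rw [← finrank_span_eq_card hli, hspan, ← rank_eq_finrank_span_row, hM]
  let e : Fin k ≃ κ := (Fintype.equivFinOfCardEq hcard).symm
  refine ⟨a ∘ e, ?_⟩
  rw [← isUnit_iff_ne_zero, ← isUnit_iff_isUnit_det, ← linearIndependent_rows_iff_isUnit]
  exact hli.comp e e.injective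

variable [LinearOrder 𝕜] [IsStrictOrderedRing 𝕜]

theorem exists_maximal_abs_submatrix_det [Fintype ι] (M : Matrix ι (Fin k) 𝕜)
    (hM : M.rank = k) :
    ∃ σ : Fin k → ι, (M.submatrix σ id).det ≠ 0 ∧
      ∀ τ : Fin k → ι, |(M.submatrix τ id).det| ≤ |(M.submatrix σ id).det| := by
  obtain ⟨σ₀, hσ₀⟩ := M.exists_submatrix_det_ne_zero_of_rank_eq hM
  obtain ⟨σ, -, hmax⟩ := Finset.exists_max_image Finset.univ
    (fun τ => |(M.submatrix τ id).det|) ⟨σ₀, Finset.mem_univ _⟩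
  refine ⟨σ, fun h => hσ₀ ?_, fun τ => hmax τ (Finset.mem_univ _)⟩
  simpa [h] using hmax σ₀ (Finset.mem_univ _)

theorem exists_row_eq_vecMul_submatrix [DecidableEq ι] (M : Matrix ι (Fin k) 𝕜)
    {σ : Fin k → ι} (hσ : (M.submatrix σ id).det ≠ 0)
    (hmax : ∀ τ : Fin k → ι, |(M.submatrix τ id).det| ≤ |(M.submatrix σ id).det|) (j : ι) :
    ∃ c : Fin k → 𝕜, (∀ i, |c i| ≤ 1) ∧ M j = c ᵥ* M.submatrix σ id := by
  set A := M.submatrix σ id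
  -- Cramer's rule: `c i` is a ratio of two `k × k` minors, the denominator being maximal.
  refine ⟨(A.det)⁻¹ • cramer Aᵀ (M j), fun i => ?_, ?_⟩
  · have : A.updateRow i (M j) = M.submatrix (Function.update σ i j) id := by
      ext i' l
      by_cases h : i' = i <;> simp [h, A, updateRow_apply]
    rw [Pi.smul_apply, cramer_transpose_apply, this, smul_eq_mul, abs_mul, abs_inv,
      inv_mul_le_one₀ (abs_pos.mpr hσ)]
    exact hmax _
  · rw [← mulVec_transpose, mulVec_smul, mulVec_cramer, det_transpose, smul_smul,
      inv_mul_cancel₀ hσ, one_smul]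

theorem exists_embedding_abs_mulVec_le_sum [Fintype ι] (M : Matrix ι (Fin k) 𝕜)
    (hM : M.rank = k) :
    ∃ σ : Fin k ↪ ι, ∀ x j, |(M *ᵥ x) j| ≤ ∑ i, |(M *ᵥ x) (σ i)| := by
  classical
  obtain ⟨σ, hσ, hmax⟩ := M.exists_maximal_abs_submatrix_det hM
  have hσinj : Function.Injective σ := fun i₁ i₂ h => by
    by_contra hne
    exact hσ (det_zero_of_row_eq hne (funext fun l => by simp [h]))
  refine ⟨⟨σ, hσinj⟩, fun x j => ?_⟩
  obtain ⟨c, hc, hrow⟩ := M.exists_row_eq_vecMul_submatrix hσ hmax j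
  calc |(M *ᵥ x) j| = |∑ i, c i * (M *ᵥ x) (σ i)| := by
        rw [mulVec, hrow, ← dotProduct_mulVec]; rfl
    _ ≤ ∑ i, |c i * (M *ᵥ x) (σ i)| := Finset.abs_sum_le_sum_abs _ _
    _ ≤ ∑ i, |(M *ᵥ x) (σ i)| := Finset.sum_le_sum fun i _ => by
        rw [abs_mul]; exact mul_le_of_le_one_left (abs_nonneg _) (hc i)

end Matrix

theorem Submodule.exists_embedding_abs_apply_le_sum {ι 𝕜 : Type*} [Fintype ι] [Field 𝕜]
    [LinearOrder 𝕜] [IsStrictOrderedRing 𝕜] {k : ℕ} (V : Submodule 𝕜 (ι → 𝕜))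
    (hV : finrank 𝕜 V = k) :
    ∃ σ : Fin k ↪ ι, ∀ v ∈ V, ∀ j, |v j| ≤ ∑ i, |v (σ i)| := by
  let b := finBasisOfFinrankEq 𝕜 V hV
  let f : (Fin k → 𝕜) →ₗ[𝕜] ι → 𝕜 := V.subtype ∘ₗ b.equivFun.symm.toLinearMap
  have hf : Function.Injective f := V.subtype_injective.comp (LinearEquiv.injective _)
  set M := LinearMap.toMatrix' f
  have hMf : ∀ x, M *ᵥ x = f x := LinearMap.toMatrix'_mulVec f
  have hrank : M.rank = k := by
    rw [Matrix.rank, LinearMap.finrank_range_of_inj, finrank_fin_fun]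
    intro x y h
    apply hf
    simpa [hMf] using h
  obtain ⟨σ, hσ⟩ := M.exists_embedding_abs_mulVec_le_sum hrank
  refine ⟨σ, fun v hv j => ?_⟩
  obtain ⟨x, rfl⟩ : ∃ x, M *ᵥ x = v := ⟨b.equivFun ⟨v, hv⟩, (hMf _).trans (by simp [f])⟩
  exact hσ x j

theorem eq_of_abs_sub_lt_one {x y : ℝ} (hx : x = 0 ∨ x = 1) (hy : y = 0 ∨ y = 1)
    (hxy : |x - y| < 1) : x = y := by
  rcases hx with rfl | rfl <;> rcases hy with rfl | rfl <;> norm_num at *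

theorem two_mul_one_add_sqrt_mul_lt_one {n k : ℕ} (hkn : k < n) :
    2 * (1 + √k) * ((1 / 4) * (n : ℝ) ^ (-(1 : ℝ) / 2) * ((n - k : ℕ) : ℝ) ^ (-(1 : ℝ) / 2))
      < 1 := by
  have hrpow : ∀ x : ℝ, 0 ≤ x → x ^ (-(1 : ℝ) / 2) = (√x)⁻¹ := fun x hx => by
    rw [neg_div, Real.rpow_neg hx, Real.sqrt_eq_rpow]
  rw [hrpow _ (Nat.cast_nonneg _), hrpow _ (Nat.cast_nonneg _)]
  have h1 : 1 ≤ √(n : ℝ) := Real.one_le_sqrt.mpr (by exact_mod_cast hkn.pos)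
  have hk : √(k : ℝ) < √n := Real.sqrt_lt_sqrt (Nat.cast_nonneg k) (by exact_mod_cast hkn)
  have hnk : 1 ≤ √((n - k : ℕ) : ℝ) :=
    Real.one_le_sqrt.mpr (by exact_mod_cast (by omega : 1 ≤ n - k))
  field_simp
  nlinarith

namespace EuclideanSpace

variable {ι : Type*} {k : ℕ}

theorem ncard_le_two_pow_of_eq_of_apply_eq {S : Set (EuclideanSpace ℝ ι)}
    (hS : ∀ a ∈ S, ∀ i, a i = 0 ∨ a i = 1) (σ : Fin k → ι)
    (hσ : ∀ a ∈ S, ∀ b ∈ S, (∀ i, a (σ i) = b (σ i)) → a = b) :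
    S.ncard ≤ 2 ^ k := by
  calc S.ncard
      ≤ (Fintype.piFinset fun _ : Fin k => ({0, 1} : Finset ℝ) : Set (Fin k → ℝ)).ncard := by
        refine Set.ncard_le_ncard_of_injOn (fun a i => a (σ i)) (fun a ha => ?_)
          (fun a ha b hb h => hσ a ha b hb (congrFun h)) (Finset.finite_toSet _)
        simpa using fun i => hS a ha (σ i)
    _ = 2 ^ k := by rw [Set.ncard_coe_finset, Fintype.card_piFinset]; simp

variable [Fintype ι]

theorem sum_abs_apply_embedding_le (x : EuclideanSpace ℝ ι) (σ : Fin k ↪ ι) :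
    ∑ i, |x (σ i)| ≤ √k * ‖x‖ := by
  have hsq : ∑ i, |x (σ i)| ^ 2 ≤ ‖x‖ ^ 2 := by
    simp_rw [EuclideanSpace.norm_sq_eq, ← Real.norm_eq_abs]
    rw [← Finset.sum_map Finset.univ σ (fun j => ‖x j‖ ^ 2)]
    exact Finset.sum_le_univ_sum_of_nonneg fun _ => sq_nonneg _
  rw [← Real.sqrt_sq (norm_nonneg x), ← Real.sqrt_mul (Nat.cast_nonneg k),
    Real.le_sqrt (Finset.sum_nonneg fun _ _ => abs_nonneg _) (by positivity)]
  calc (∑ i, |x (σ i)|) ^ 2 ≤ k * ∑ i, |x (σ i)| ^ 2 := by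
        simpa using sq_sum_le_card_mul_sum_sq (s := Finset.univ) (f := fun i => |x (σ i)|)
    _ ≤ k * ‖x‖ ^ 2 := by gcongr

theorem abs_apply_add_le_of_apply_embedding_eq_zero {V : Submodule ℝ (EuclideanSpace ℝ ι)}
    {σ : Fin k ↪ ι} (hσ : ∀ v ∈ V, ∀ j, |v j| ≤ ∑ i, |v (σ i)|) {v d : EuclideanSpace ℝ ι}
    (hv : v ∈ V) (hvd : ∀ i, (v + d) (σ i) = 0) (j : ι) :
    |(v + d) j| ≤ (1 + √k) * ‖d‖ := by
  have hv_eq : ∀ i, |v (σ i)| = |d (σ i)| := fun i => by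
    rw [eq_neg_of_add_eq_zero_left (a := v (σ i)) (by simpa using hvd i), abs_neg]
  calc |(v + d) j| ≤ |v j| + |d j| := abs_add_le _ _
    _ ≤ ∑ i, |d (σ i)| + ‖d‖ := by
        gcongr
        · simpa only [hv_eq] using hσ v hv j
        · exact PiLp.norm_apply_le d j
    _ ≤ √k * ‖d‖ + ‖d‖ := by gcongr; exact sum_abs_apply_embedding_le d σ
    _ = (1 + √k) * ‖d‖ := by ring

theorem eq_of_dist_lt_of_apply_embedding_eq {V : Submodule ℝ (EuclideanSpace ℝ ι)} {σ : Fin k ↪ ι}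
    (hσ : ∀ v ∈ V, ∀ j, |v j| ≤ ∑ i, |v (σ i)|) {ε : ℝ} (hε : 2 * (1 + √k) * ε < 1)
    {a b p q : EuclideanSpace ℝ ι} (ha : ∀ i, a i = 0 ∨ a i = 1) (hb : ∀ i, b i = 0 ∨ b i = 1)
    (hpq : p - q ∈ V) (hap : dist a p < ε) (hbq : dist b q < ε)
    (hab : ∀ i, a (σ i) = b (σ i)) : a = b := by
  have hsplit : a - b = (p - q) + ((a - p) - (b - q)) := by abel
  have hd : ‖(a - p) - (b - q)‖ < 2 * ε := by
    calc ‖(a - p) - (b - q)‖ ≤ ‖a - p‖ + ‖b - q‖ := norm_sub_le _ _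
      _ < ε + ε := by rw [← dist_eq_norm, ← dist_eq_norm]; exact add_lt_add hap hbq
      _ = 2 * ε := by ring
  ext j
  refine eq_of_abs_sub_lt_one (ha j) (hb j) ?_
  have hj := abs_apply_add_le_of_apply_embedding_eq_zero hσ hpq
    (fun i => by rw [← hsplit]; simp [hab i]) j
  calc |a j - b j| = |(p - q + (a - p - (b - q))) j| := by rw [← hsplit]; rfl
    _ ≤ (1 + √k) * ‖(a - p) - (b - q)‖ := hj
    _ < (1 + √k) * (2 * ε) := by gcongr
    _ < 1 := by linarith

end EuclideanSpace

theorem boolean_cube_affine_intersection_general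
    (n k : ℕ) (hkn : k < n)
    (Γ₀ : Submodule ℝ (EuclideanSpace ℝ (Fin n)))
    (hdim : Module.finrank ℝ Γ₀ = k)
    (a₀ : EuclideanSpace ℝ (Fin n)) :
    Set.ncard {a : EuclideanSpace ℝ (Fin n) |
        (∀ i, a i = 0 ∨ a i = 1) ∧
        Metric.infDist a ((a₀ + ·) '' (Γ₀ : Set (EuclideanSpace ℝ (Fin n)))) <
          (1 / 4) * (n : ℝ) ^ (-(1 : ℝ) / 2) * ((n - k : ℕ) : ℝ) ^ (-(1 : ℝ) / 2)}
      ≤ 2 ^ (k + 1) := by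
  obtain ⟨σ, hσ⟩ := (Γ₀.map (WithLp.linearEquiv 2 ℝ (Fin n → ℝ)).toLinearMap
    ).exists_embedding_abs_apply_le_sum ((LinearEquiv.finrank_map_eq _ _).trans hdim)
  have hΓ : ((a₀ + ·) '' (Γ₀ : Set (EuclideanSpace ℝ (Fin n)))).Nonempty :=
    ⟨a₀ + 0, 0, Γ₀.zero_mem, rfl⟩
  refine (EuclideanSpace.ncard_le_two_pow_of_eq_of_apply_eq (fun a ha => ha.1) σ ?_).trans
    (Nat.pow_le_pow_right two_pos k.le_succ)
  rintro a ⟨ha, had⟩ b ⟨hb, hbd⟩ hab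
  obtain ⟨_, ⟨u, hu, rfl⟩, hau⟩ := (Metric.infDist_lt_iff hΓ).1 had
  obtain ⟨_, ⟨w, hw, rfl⟩, hbw⟩ := (Metric.infDist_lt_iff hΓ).1 hbd
  exact EuclideanSpace.eq_of_dist_lt_of_apply_embedding_eq
    (fun v hv => hσ _ (Submodule.mem_map_of_mem hv)) (two_mul_one_add_sqrt_mul_lt_one hkn)
    ha hb (show a₀ + u - (a₀ + w) ∈ Γ₀ by simpa using Γ₀.sub_mem hu hw) hau hbw hab

/-- Let `n > k` be positive integers, `Bⁿ = {0,1}ⁿ ⊂ ℝⁿ` the Boolean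
cube.  For any `k`-dimensional affine subspace `Γ = a₀ + Γ₀` of `ℝⁿ`, the number of points
of `Bⁿ` at Euclidean distance `< (1/4)·n^{-1/2}·(n-k)^{-1/2}` from `Γ` is at most `2^(k+1)`. -/
theorem boolean_cube_affine_intersection
    (n k : ℕ) (hk : 0 < k) (hkn : k < n)
    (Γ₀ : Submodule ℝ (EuclideanSpace ℝ (Fin n)))
    (hdim : Module.finrank ℝ Γ₀ = k)
    (a₀ : EuclideanSpace ℝ (Fin n)) :
    Set.ncard {a : EuclideanSpace ℝ (Fin n) |
        (∀ i, a i = 0 ∨ a i = 1) ∧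
        Metric.infDist a ((a₀ + ·) '' (Γ₀ : Set (EuclideanSpace ℝ (Fin n)))) <
          (1 / 4) * (n : ℝ) ^ (-(1 : ℝ) / 2) * ((n - k : ℕ) : ℝ) ^ (-(1 : ℝ) / 2)}
      ≤ 2 ^ (k + 1) :=
  boolean_cube_affine_intersection_general n k hkn Γ₀ hdim a₀
end

section
/- In the setting of the triangular matrix lemma: if A = (a_{ij}) is a d×d lower triangular matrix with |a_{ii}| = 1 and |a_{ij}| ≤ K^{|i-j|}, and I = {m₁ < ... < m_{d'}} ⊆ {1,...,d}, then the entries a''_{ij} of the inverse of the principal submatrix A_I satisfy |a''_{ij}| ≤ (2K)^{m_i - m_j} for all i ≥ j (and a''_{ij} = 0 for i < j). -/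
/-- With `A` a `d × d` lower triangular matrix with `|a_{ii}| = 1` and
`|a_{ij}| ≤ K^{|i-j|}`, and `I = {m₁ < … < m_{d'}}` (encoded by a strictly monotone
`e : Fin d' → Fin d`), the entries `a''_{ij}` of the inverse of the principal submatrix
`A_I` satisfy `a''_{ij} = 0` for `i < j` and `|a''_{ij}| ≤ (2K)^{m_i - m_j}` for `j ≤ i`. -/
theorem triangular_submatrix_inverse_entries
    (d : ℕ) (K : ℝ) (hK : 0 < K)
    (A : Matrix (Fin d) (Fin d) ℝ)
    (htri : ∀ i j : Fin d, i < j → A i j = 0)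
    (hdiag : ∀ i : Fin d, |A i i| = 1)
    (hbnd : ∀ i j : Fin d, |A i j| ≤ K ^ ((i : ℤ) - (j : ℤ)).natAbs)
    (d' : ℕ) (e : Fin d' → Fin d) (he : StrictMono e) :
    ∀ i j : Fin d',
      (i < j → (A.submatrix e e)⁻¹ i j = 0) ∧
      (j ≤ i → |(A.submatrix e e)⁻¹ i j| ≤ (2 * K) ^ ((e i : ℕ) - (e j : ℕ))) := by
  set B := A.submatrix e e with hBdef
  have hBtri : B.BlockTriangular OrderDual.toDual := by
    intro i j hij
    exact htri _ _ (he (show i < j from hij))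
  have hBdiag : ∀ i : Fin d', |B i i| = 1 := fun i => hdiag (e i)
  have hBdiag_ne : ∀ i : Fin d', B i i ≠ 0 := by
    intro i h
    have := hBdiag i
    rw [h, abs_zero] at this
    norm_num at this
  have hdet : B.det ≠ 0 := by
    rw [Matrix.det_of_lowerTriangular B hBtri]
    exact Finset.prod_ne_zero_iff.mpr fun i _ => hBdiag_ne i
  have hdetu : IsUnit B.det := isUnit_iff_ne_zero.mpr hdet
  haveI : Invertible B := B.invertibleOfIsUnitDet hdetu
  have hCbt : (B⁻¹).BlockTriangular OrderDual.toDual :=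
    Matrix.blockTriangular_inv_of_blockTriangular hBtri
  set C := B⁻¹ with hCdef
  have hCtri : ∀ i j : Fin d', i < j → C i j = 0 := fun i j h => hCbt h
  have hBC : B * C = 1 := Matrix.mul_nonsing_inv B hdetu
  have hsum : ∀ i j : Fin d', ∑ k, B i k * C k j = if i = j then (1:ℝ) else 0 := by
    intro i j
    have := congrFun (congrFun hBC i) j
    rw [Matrix.mul_apply] at this
    rw [this, Matrix.one_apply]
  -- bound on entries of B
  have hBbnd : ∀ i j : Fin d', j ≤ i → |B i j| ≤ K ^ ((e i : ℕ) - (e j : ℕ)) := by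
    intro i j hji
    have hej : (e j : ℕ) ≤ (e i : ℕ) := he.monotone hji
    have := hbnd (e i) (e j)
    have harg : (((e i : Fin d) : ℤ) - ((e j : Fin d) : ℤ)).natAbs = (e i : ℕ) - (e j : ℕ) := by
      omega
    rwa [harg] at this
  -- diagonal of C
  have hCdiag : ∀ i : Fin d', |C i i| = 1 := by
    intro i
    have h1 : ∑ k, B i k * C k i = 1 := by rw [hsum i i, if_pos rfl]
    have h2 : ∑ k, B i k * C k i = B i i * C i i := by
      apply Finset.sum_eq_single
      · intro k _ hk
        rcases lt_or_gt_of_ne hk with h | h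
        · rw [hCtri k i h, mul_zero]
        · have hz : B i k = 0 := htri (e i) (e k) (he h)
          rw [hz, zero_mul]
      · intro h; exact absurd (Finset.mem_univ i) h
    have h3 : B i i * C i i = 1 := by rw [← h2, h1]
    have := congrArg abs h3
    rw [abs_mul, hBdiag i, one_mul, abs_one] at this
    exact this
  -- main induction
  have main : ∀ n : ℕ, ∀ i j : Fin d', (i : ℕ) = n → j ≤ i →
      |C i j| ≤ (2 * K) ^ ((e i : ℕ) - (e j : ℕ)) := by
    intro n
    induction n using Nat.strong_induction_on with
    | _ n IH =>
      intro i j hin hji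
      rcases eq_or_lt_of_le hji with h | hji'
      · subst h
        rw [hCdiag j, Nat.sub_self, pow_zero]
      · -- j < i
        set M : ℕ := (e i : ℕ) - (e j : ℕ) with hM
        have hejei : (e j : ℕ) < (e i : ℕ) := he hji'
        -- recurrence
        set s : Finset (Fin d') := Finset.univ.filter (fun k => j ≤ k ∧ k ≤ i) with hs
        have h0 : ∑ k ∈ s, B i k * C k j = 0 := by
          have hI := hsum i j
          rw [if_neg (ne_of_gt hji')] at hI
          rw [← hI]
          apply Finset.sum_subset (Finset.subset_univ s)
          intro k _ hk
          rw [hs, Finset.mem_filter] at hk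
          push_neg at hk
          rcases le_or_gt j k with h | h
          · have hz : B i k = 0 := htri (e i) (e k) (he (hk (Finset.mem_univ k) h))
            rw [hz, zero_mul]
          · rw [hCtri k j h, mul_zero]
        have hi_mem : i ∈ s := by
          rw [hs, Finset.mem_filter]
          exact ⟨Finset.mem_univ i, hji, le_refl i⟩
        have hsplit : B i i * C i j + ∑ k ∈ s.erase i, B i k * C k j = 0 := by
          rw [Finset.add_sum_erase s (fun k => B i k * C k j) hi_mem]
          exact h0
        have heq : B i i * C i j = -∑ k ∈ s.erase i, B i k * C k j := by linarith
        have habs : |C i j| = |∑ k ∈ s.erase i, B i k * C k j| := by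
          have := congrArg abs heq
          rw [abs_mul, hBdiag i, one_mul, abs_neg] at this
          exact this
        rw [habs]
        -- bound the sum
        have hterm : ∀ k ∈ s.erase i, |B i k * C k j| ≤
            K ^ M * 2 ^ ((e k : ℕ) - (e j : ℕ)) := by
          intro k hk
          rw [Finset.mem_erase, hs, Finset.mem_filter] at hk
          have hjk : j ≤ k := hk.2.2.1
          have hki : k < i := lt_of_le_of_ne hk.2.2.2 hk.1
          have hIH : |C k j| ≤ (2 * K) ^ ((e k : ℕ) - (e j : ℕ)) :=
            IH (k : ℕ) (by omega) k j rfl hjk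
          have hBik : |B i k| ≤ K ^ ((e i : ℕ) - (e k : ℕ)) := hBbnd i k (le_of_lt hki)
          rw [abs_mul]
          calc |B i k| * |C k j| ≤ K ^ ((e i : ℕ) - (e k : ℕ)) * (2 * K) ^ ((e k : ℕ) - (e j : ℕ)) := by
                apply mul_le_mul hBik hIH (abs_nonneg _) (pow_nonneg (le_of_lt hK) _)
            _ = K ^ M * 2 ^ ((e k : ℕ) - (e j : ℕ)) := by
                rw [mul_pow]
                have hek1 : (e j : ℕ) ≤ (e k : ℕ) := he.monotone hjk
                have hek2 : (e k : ℕ) < (e i : ℕ) := he hki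
                have : (e i : ℕ) - (e k : ℕ) + ((e k : ℕ) - (e j : ℕ)) = M := by omega
                rw [← this, pow_add]
                ring
        calc |∑ k ∈ s.erase i, B i k * C k j| ≤ ∑ k ∈ s.erase i, |B i k * C k j| :=
              Finset.abs_sum_le_sum_abs _ _
          _ ≤ ∑ k ∈ s.erase i, K ^ M * 2 ^ ((e k : ℕ) - (e j : ℕ)) :=
              Finset.sum_le_sum hterm
          _ = K ^ M * ∑ k ∈ s.erase i, (2:ℝ) ^ ((e k : ℕ) - (e j : ℕ)) := by
              rw [Finset.mul_sum]
          _ ≤ K ^ M * 2 ^ M := by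
              apply mul_le_mul_of_nonneg_left _ (pow_nonneg (le_of_lt hK) _)
              have hinj : Set.InjOn (fun k : Fin d' => (e k : ℕ) - (e j : ℕ)) (s.erase i) := by
                intro a ha b hb hab
                rw [Finset.mem_coe, Finset.mem_erase, hs, Finset.mem_filter] at ha hb
                have h1 : (e j : ℕ) ≤ (e a : ℕ) := he.monotone ha.2.2.1
                have h2 : (e j : ℕ) ≤ (e b : ℕ) := he.monotone hb.2.2.1
                have : (e a : ℕ) = (e b : ℕ) := by simp only at hab; omega
                exact he.injective (Fin.ext this)
              calc ∑ k ∈ s.erase i, (2:ℝ) ^ ((e k : ℕ) - (e j : ℕ))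
                  = ∑ t ∈ (s.erase i).image (fun k => (e k : ℕ) - (e j : ℕ)), (2:ℝ) ^ t := by
                    rw [Finset.sum_image (fun a ha b hb => hinj ha hb)]
                _ ≤ ∑ t ∈ Finset.range M, (2:ℝ) ^ t := by
                    apply Finset.sum_le_sum_of_subset_of_nonneg
                    · intro t ht
                      rw [Finset.mem_image] at ht
                      obtain ⟨k, hk, rfl⟩ := ht
                      rw [Finset.mem_erase, hs, Finset.mem_filter] at hk
                      have h1 : (e j : ℕ) ≤ (e k : ℕ) := he.monotone hk.2.2.1
                      have h2 : (e k : ℕ) < (e i : ℕ) :=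
                        he (lt_of_le_of_ne hk.2.2.2 hk.1)
                      rw [Finset.mem_range]
                      omega
                    · intro t _ _
                      positivity
                _ = 2 ^ M - 1 := by
                    rw [geom_sum_eq (by norm_num : (2:ℝ) ≠ 1)]
                    norm_num
                _ ≤ 2 ^ M := by linarith
          _ = (2 * K) ^ M := by rw [mul_pow]; ring
  intro i j
  constructor
  · exact fun h => hCtri i j h
  · exact fun h => main (i : ℕ) i j rfl h
end

section
/- Let n ≥ 1, k ∈ {1,...,n}, and let P_k be the orthogonal projection onto the k-th coordinate in ℝ^n. Let A be a symmetric n×n matrix with eigenvalues λ₁ ≤ ... ≤ λ_n and orthonormal eigenbasis v₁,...,v_n. If λ is not an eigenvalue of A and Σ_{i=1}^n v_i(k)²/(λ_i - λ) > 0, then for every t > 0, λ is not an eigenvalue of A + t·P_k. -/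
/-!
The eigenvalue equation for `A + t P_k` reads `(A - λ) u = -t u(k) e_k`. Expanding `u` in the
eigenbasis of `A` and reading off the `k`-th coordinate gives
`u(k) = -t u(k) Σᵢ vᵢ(k)² / (λᵢ - λ)`, so `u(k) (1 + t Σᵢ …) = 0`. The sum is positive, hence
`u(k) = 0`; then `u` is a `λ`-eigenvector of `A` itself, so `u = 0`.
-/

open Matrix

section OrthonormalEigenbasis

variable {ι : Type*} [Fintype ι]

theorem Matrix.IsSymm.dotProduct_mulVec_of_mulVec_eq_smul {A : Matrix ι ι ℝ} (hA : A.IsSymm)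
    {x : ι → ℝ} {μ : ℝ} (hx : A *ᵥ x = μ • x) (u : ι → ℝ) :
    x ⬝ᵥ (A *ᵥ u) = μ * (x ⬝ᵥ u) := by
  rw [dotProduct_mulVec, ← mulVec_transpose, hA.eq, hx, smul_dotProduct, smul_eq_mul]

theorem eq_sum_mul_dotProduct_of_orthonormal [DecidableEq ι] {v : ι → ι → ℝ}
    (horth : ∀ i j, v i ⬝ᵥ v j = if i = j then (1 : ℝ) else 0) (u : ι → ℝ) (j : ι) :
    u j = ∑ i, v i j * (v i ⬝ᵥ u) := by
  have hrows : Matrix.of v * (Matrix.of v)ᵀ = 1 := by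
    ext i i'
    simpa [mul_apply, dotProduct, one_apply] using horth i i'
  -- A square matrix with orthonormal rows also has orthonormal columns.
  have hcols : (Matrix.of v)ᵀ * Matrix.of v = 1 := mul_eq_one_comm.mp hrows
  calc u j = ((Matrix.of v)ᵀ *ᵥ (Matrix.of v *ᵥ u)) j := by rw [mulVec_mulVec, hcols, one_mulVec]
    _ = ∑ i, v i j * (v i ⬝ᵥ u) := by simp [mulVec, dotProduct]

theorem eq_sum_div_of_mulVec_sub_smul_eq [DecidableEq ι] {A : Matrix ι ι ℝ} (hA : A.IsSymm)
    {μ : ι → ℝ} {v : ι → ι → ℝ}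
    (horth : ∀ i j, v i ⬝ᵥ v j = if i = j then (1 : ℝ) else 0)
    (heig : ∀ i, A *ᵥ v i = μ i • v i) {lam : ℝ} (hlam : ∀ i, μ i ≠ lam)
    {u w : ι → ℝ} (huw : A *ᵥ u - lam • u = w) (j : ι) :
    u j = ∑ i, v i j * (v i ⬝ᵥ w) / (μ i - lam) := by
  rw [eq_sum_mul_dotProduct_of_orthonormal horth u j]
  refine Finset.sum_congr rfl fun i _ => ?_
  have hcoeff : v i ⬝ᵥ w = (μ i - lam) * (v i ⬝ᵥ u) := by
    rw [← huw, dotProduct_sub, dotProduct_smul, hA.dotProduct_mulVec_of_mulVec_eq_smul (heig i),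
      smul_eq_mul]
    ring
  rw [hcoeff, mul_div_assoc, mul_div_cancel_left₀ _ (sub_ne_zero.mpr (hlam i))]

theorem eq_mul_sum_sq_div_of_mulVec_sub_smul_eq_single [DecidableEq ι] {A : Matrix ι ι ℝ}
    (hA : A.IsSymm) {μ : ι → ℝ} {v : ι → ι → ℝ}
    (horth : ∀ i j, v i ⬝ᵥ v j = if i = j then (1 : ℝ) else 0)
    (heig : ∀ i, A *ᵥ v i = μ i • v i) {lam : ℝ} (hlam : ∀ i, μ i ≠ lam)
    {u : ι → ℝ} {k : ι} {a : ℝ} (hu : A *ᵥ u - lam • u = Pi.single k a) :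
    u k = a * ∑ i, v i k ^ 2 / (μ i - lam) := by
  rw [eq_sum_div_of_mulVec_sub_smul_eq hA horth heig hlam hu k, Finset.mul_sum]
  exact Finset.sum_congr rfl fun i _ => by rw [dotProduct_single]; ring

end OrthonormalEigenbasis

theorem eigenvalue_obstruction_general
    (n : ℕ) (k : Fin n)
    (A : Matrix (Fin n) (Fin n) ℝ) (hA : A.IsSymm)
    (μ : Fin n → ℝ)
    (v : Fin n → Fin n → ℝ)
    (horth : ∀ i j, v i ⬝ᵥ v j = if i = j then (1 : ℝ) else 0)
    (heig : ∀ i, A.mulVec (v i) = μ i • v i)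
    (lam : ℝ)
    (hnot : ∀ u : Fin n → ℝ, A.mulVec u = lam • u → u = 0)
    (hsum : 0 < ∑ i, v i k ^ 2 / (μ i - lam)) :
    ∀ t : ℝ, 0 < t → ∀ u : Fin n → ℝ,
      (A + t • Matrix.single k k (1 : ℝ)).mulVec u = lam • u → u = 0 := by
  intro t ht u hu
  have hlam : ∀ i, μ i ≠ lam := fun i hi => by
    have hvi : v i = 0 := hnot (v i) (hi ▸ heig i)
    simpa [hvi] using horth i i
  have hP : Matrix.single k k (1 : ℝ) *ᵥ u = Pi.single k (u k) := by
    rw [single_mulVec, one_mul]; rfl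
  have hres : A *ᵥ u - lam • u = Pi.single k (-t * u k) := by
    rw [← hu, add_mulVec, smul_mulVec, hP, sub_add_cancel_left, neg_mul, Pi.single_neg,
      ← smul_eq_mul, Pi.single_smul']
  have huk : u k * (1 + t * ∑ i, v i k ^ 2 / (μ i - lam)) = 0 := by
    linear_combination eq_mul_sum_sq_div_of_mulVec_sub_smul_eq_single hA horth heig hlam hres
  have huk0 : u k = 0 := (mul_eq_zero.mp huk).resolve_right (by positivity)
  rw [add_mulVec, smul_mulVec, hP, huk0, Pi.single_zero, smul_zero, add_zero] at hu
  exact hnot u hu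

/-- Let `A` be a symmetric `n × n` real matrix with eigenvalues
`λ₁ ≤ … ≤ λ_n` and orthonormal eigenbasis `v₁,…,v_n`, and let `P_k` be the orthogonal
projection onto the `k`-th coordinate.  If `λ` is not an eigenvalue of `A` and
`Σᵢ vᵢ(k)²/(λᵢ - λ) > 0`, then for every `t > 0`, `λ` is not an eigenvalue of
`A + t·P_k`. -/
theorem eigenvalue_obstruction
    (n : ℕ) (hn : 0 < n) (k : Fin n)
    (A : Matrix (Fin n) (Fin n) ℝ) (hA : A.IsSymm)
    (μ : Fin n → ℝ) (hμ : Monotone μ)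
    (v : Fin n → Fin n → ℝ)
    (horth : ∀ i j, v i ⬝ᵥ v j = if i = j then (1 : ℝ) else 0)
    (heig : ∀ i, A.mulVec (v i) = μ i • v i)
    (lam : ℝ)
    (hnot : ∀ u : Fin n → ℝ, A.mulVec u = lam • u → u = 0)
    (hsum : 0 < ∑ i, v i k ^ 2 / (μ i - lam)) :
    ∀ t : ℝ, 0 < t → ∀ u : Fin n → ℝ,
      (A + t • Matrix.single k k (1 : ℝ)).mulVec u = lam • u → u = 0 :=
  eigenvalue_obstruction_general n k A hA μ v horth heig lam hnot hsum
end

section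
/- Let Γ₀ be a k-dimensional linear subspace of ℝ^n, let P be the orthogonal projection onto the orthogonal complement of Γ₀, and let Γ' be a coordinate subspace spanned by n-k-1 standard basis vectors such that the smallest nonzero eigenvalue bound ‖PQ†a‖₂ ≥ √(1/(4n(n-k)))·‖a‖₂ holds for all a ∈ Γ', where Q is the orthogonal projection onto Γ'. Then for any translate v' ∈ ℝ^n, the shifted Boolean subcube B' + v' (where B' = {Σ_{i} x_i e_i : x_i ∈ {0,1}, e_i spanning Γ'}) contains at most one point at distance less than (1/4)·n^{-1/2}·(n-k)^{-1/2} from any fixed affine translate Γ of Γ₀. -/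
/-!
Two distinct points of the shifted Boolean cube differ by a vector `a` of the coordinate subspace
with a coordinate `±1`, so `‖a‖ ≥ 1` and, by hypothesis, `‖P a‖ ≥ √(1/(4n(n-k))) ≥ 2ε`, where
`ε` is the radius.
On the other hand, `P` kills `Γ₀`, so `‖P (x - a₀)‖ ≤ dist(x, a₀ + Γ₀)`; if both points were
`ε`-close to `a₀ + Γ₀`, the triangle inequality would give `‖P a‖ < 2ε`.
-/

open Metric

section OrthogonalProjection

variable {E : Type*} [NormedAddCommGroup E] [InnerProductSpace ℝ E]

theorem norm_orthogonalProjectionOnto_orthogonal_sub_le_infDist (K : Submodule ℝ E)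
    [Kᗮ.HasOrthogonalProjection] (a₀ z : E) :
    ‖Kᗮ.orthogonalProjectionOnto (z - a₀)‖ ≤ infDist z ((a₀ + ·) '' (K : Set E)) := by
  refine (le_infDist (Set.Nonempty.image _ ⟨0, K.zero_mem⟩)).2 ?_
  rintro _ ⟨g, hg, rfl⟩
  have hPg : Kᗮ.orthogonalProjectionOnto g = 0 :=
    K.orthogonalProjectionOnto_orthogonal_apply_eq_zero hg
  calc ‖Kᗮ.orthogonalProjectionOnto (z - a₀)‖
      = ‖Kᗮ.orthogonalProjectionOnto (z - (a₀ + g))‖ := by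
        rw [sub_add_eq_sub_sub, map_sub _ (z - a₀) g, hPg, sub_zero]
    _ ≤ dist z (a₀ + g) := by
        rw [dist_eq_norm]; exact Kᗮ.norm_orthogonalProjectionOnto_apply_le _

theorem norm_orthogonalProjectionOnto_orthogonal_sub_lt_of_infDist_lt (K : Submodule ℝ E)
    [Kᗮ.HasOrthogonalProjection] {a₀ x y : E} {ε : ℝ}
    (hx : infDist x ((a₀ + ·) '' (K : Set E)) < ε)
    (hy : infDist y ((a₀ + ·) '' (K : Set E)) < ε) :
    ‖Kᗮ.orthogonalProjectionOnto (x - y)‖ < 2 * ε := by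
  have hP := (norm_orthogonalProjectionOnto_orthogonal_sub_le_infDist K a₀ x).trans_lt hx
  have hQ := (norm_orthogonalProjectionOnto_orthogonal_sub_le_infDist K a₀ y).trans_lt hy
  calc ‖Kᗮ.orthogonalProjectionOnto (x - y)‖
      = ‖Kᗮ.orthogonalProjectionOnto (x - a₀) - Kᗮ.orthogonalProjectionOnto (y - a₀)‖ := by
        rw [← map_sub, sub_sub_sub_cancel_right]
    _ ≤ ‖Kᗮ.orthogonalProjectionOnto (x - a₀)‖ + ‖Kᗮ.orthogonalProjectionOnto (y - a₀)‖ :=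
        norm_sub_le _ _
    _ < 2 * ε := by linarith

end OrthogonalProjection

section BooleanCube

variable {ι : Type*}

/-- `B' + v'`, with `B'` the Boolean cube of the coordinate subspace spanned by `S`. -/
def shiftedBooleanCube (S : Finset ι) (v' : EuclideanSpace ℝ ι) : Set (EuclideanSpace ℝ ι) :=
  {x | (∀ i ∈ S, x i - v' i = 0 ∨ x i - v' i = 1) ∧ ∀ i ∉ S, x i = v' i}

variable {S : Finset ι} {v' x y : EuclideanSpace ℝ ι}

theorem sub_apply_eq_zero_of_mem_shiftedBooleanCube (hx : x ∈ shiftedBooleanCube S v')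
    (hy : y ∈ shiftedBooleanCube S v') {i : ι} (hi : i ∉ S) : (x - y) i = 0 := by
  rw [PiLp.sub_apply, hx.2 i hi, hy.2 i hi, sub_self]

theorem one_le_norm_sub_of_mem_shiftedBooleanCube [Fintype ι] (hx : x ∈ shiftedBooleanCube S v')
    (hy : y ∈ shiftedBooleanCube S v') (hne : x ≠ y) : 1 ≤ ‖x - y‖ := by
  obtain ⟨i, hi⟩ : ∃ i, (x - y) i ≠ 0 := by
    by_contra! h
    exact hne (sub_eq_zero.1 (PiLp.ext h))
  have hiS : i ∈ S := by
    by_contra hiS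
    exact hi (sub_apply_eq_zero_of_mem_shiftedBooleanCube hx hy hiS)
  have habs : |(x - y) i| = 1 := by
    rw [PiLp.sub_apply, ← sub_sub_sub_cancel_right (x i) (y i) (v' i)] at hi ⊢
    rcases hx.1 i hiS with h₁ | h₁ <;> rcases hy.1 i hiS with h₂ | h₂ <;>
      simp_all
  calc (1 : ℝ) = ‖(x - y) i‖ := by rw [Real.norm_eq_abs, habs]
    _ ≤ ‖x - y‖ := PiLp.norm_apply_le _ _

end BooleanCube

theorem two_mul_quarter_mul_rpow_eq_sqrt {a b : ℝ} (ha : 0 ≤ a) (hb : 0 ≤ b) :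
    2 * ((1 / 4) * a ^ (-(1 : ℝ) / 2) * b ^ (-(1 : ℝ) / 2)) = √(1 / (4 * a * b)) := by
  rw [neg_div, Real.rpow_neg ha, Real.rpow_neg hb, ← Real.sqrt_eq_rpow, ← Real.sqrt_eq_rpow,
    one_div (4 * a * b), Real.sqrt_inv, Real.sqrt_mul (by positivity), Real.sqrt_mul (by norm_num),
    show (4 : ℝ) = 2 ^ 2 by norm_num, Real.sqrt_sq (by norm_num), mul_inv, mul_inv]
  ring

theorem two_mul_quarter_mul_rpow_le_sqrt (n k : ℕ) :
    2 * ((1 / 4) * (n : ℝ) ^ (-(1 : ℝ) / 2) * ((n - k : ℕ) : ℝ) ^ (-(1 : ℝ) / 2)) ≤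
      √(1 / (4 * n * ((n : ℝ) - k))) := by
  rcases le_or_gt k n with hkn | hnk
  · rw [two_mul_quarter_mul_rpow_eq_sqrt (Nat.cast_nonneg _) (Nat.cast_nonneg _),
      Nat.cast_sub hkn]
  · rw [Nat.sub_eq_zero_of_le hnk.le, Nat.cast_zero, Real.zero_rpow (by norm_num),
      mul_zero, mul_zero]
    exact Real.sqrt_nonneg _

theorem shifted_boolean_subcube_close_point_unique_general
    (n k : ℕ)
    (Γ₀ : Submodule ℝ (EuclideanSpace ℝ (Fin n)))
    (S : Finset (Fin n))
    (hproj : ∀ a : EuclideanSpace ℝ (Fin n), (∀ i ∉ S, a i = 0) →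
      Real.sqrt (1 / (4 * n * ((n : ℝ) - k))) * ‖a‖ ≤ ‖Γ₀ᗮ.orthogonalProjectionOnto a‖)
    (v' a₀ : EuclideanSpace ℝ (Fin n)) :
    Set.Subsingleton {x : EuclideanSpace ℝ (Fin n) |
      (∀ i ∈ S, x i - v' i = 0 ∨ x i - v' i = 1) ∧ (∀ i ∉ S, x i = v' i) ∧
      Metric.infDist x ((a₀ + ·) '' (Γ₀ : Set (EuclideanSpace ℝ (Fin n)))) <
        (1 / 4) * (n : ℝ) ^ (-(1 : ℝ) / 2) * ((n - k : ℕ) : ℝ) ^ (-(1 : ℝ) / 2)} := by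
  rintro x ⟨hx₁, hx₂, hxΓ⟩ y ⟨hy₁, hy₂, hyΓ⟩
  by_contra hne
  have hx : x ∈ shiftedBooleanCube S v' := ⟨hx₁, hx₂⟩
  have hy : y ∈ shiftedBooleanCube S v' := ⟨hy₁, hy₂⟩
  have hfar := hproj (x - y) fun i hi => sub_apply_eq_zero_of_mem_shiftedBooleanCube hx hy hi
  have hnear := norm_orthogonalProjectionOnto_orthogonal_sub_lt_of_infDist_lt Γ₀ hxΓ hyΓ
  have hnorm := one_le_norm_sub_of_mem_shiftedBooleanCube hx hy hne
  refine lt_irrefl (√(1 / (4 * n * ((n : ℝ) - k)))) ?_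
  calc √(1 / (4 * n * ((n : ℝ) - k)))
      ≤ √(1 / (4 * n * ((n : ℝ) - k))) * ‖x - y‖ :=
        le_mul_of_one_le_right (Real.sqrt_nonneg _) hnorm
    _ ≤ ‖Γ₀ᗮ.orthogonalProjectionOnto (x - y)‖ := hfar
    _ < 2 * ((1 / 4) * (n : ℝ) ^ (-(1 : ℝ) / 2) * ((n - k : ℕ) : ℝ) ^ (-(1 : ℝ) / 2)) := hnear
    _ ≤ √(1 / (4 * n * ((n : ℝ) - k))) := two_mul_quarter_mul_rpow_le_sqrt n k

/-- Let `Γ₀` be a `k`-dimensional subspace of `ℝⁿ`, `P` the orthogonal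
projection onto `Γ₀ᗮ`, and `Γ'` the coordinate subspace spanned by the `n-k-1` standard
basis vectors indexed by `S`, such that `‖Pa‖ ≥ √(1/(4n(n-k)))·‖a‖` for all `a ∈ Γ'`.
Then for any translate `v'`, the shifted Boolean subcube `B' + v'` (with `B'` the Boolean
cube of `Γ'`) contains at most one point at distance `< (1/4)·n^{-1/2}·(n-k)^{-1/2}` from
any affine translate `Γ = a₀ + Γ₀` of `Γ₀`. -/
theorem shifted_boolean_subcube_close_point_unique
    (n k : ℕ) (hk : k < n)
    (Γ₀ : Submodule ℝ (EuclideanSpace ℝ (Fin n)))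
    (hdim : Module.finrank ℝ Γ₀ = k)
    (S : Finset (Fin n)) (hS : S.card = n - k - 1)
    (hproj : ∀ a : EuclideanSpace ℝ (Fin n), (∀ i ∉ S, a i = 0) →
      Real.sqrt (1 / (4 * n * ((n : ℝ) - k))) * ‖a‖ ≤ ‖Γ₀ᗮ.orthogonalProjectionOnto a‖)
    (v' a₀ : EuclideanSpace ℝ (Fin n)) :
    Set.Subsingleton {x : EuclideanSpace ℝ (Fin n) |
      (∀ i ∈ S, x i - v' i = 0 ∨ x i - v' i = 1) ∧ (∀ i ∉ S, x i = v' i) ∧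
      Metric.infDist x ((a₀ + ·) '' (Γ₀ : Set (EuclideanSpace ℝ (Fin n)))) <
        (1 / 4) * (n : ℝ) ^ (-(1 : ℝ) / 2) * ((n - k : ℕ) : ℝ) ^ (-(1 : ℝ) / 2)} :=
  shifted_boolean_subcube_close_point_unique_general n k Γ₀ S hproj v' a₀
end

section
/- In the tilted-rectangle setting with λ ∈ [-2,10] and V̄ ≥ 2, and V taking values in {0,V̄}: if Hu = λu in R_{[a₁+1,a₂-1],[b₁+1,b₂-1]} and ‖u‖_{ℓ∞(∂ʷR)} = 1 on the west boundary, then ‖u‖_{ℓ∞(R)} ≤ (V̄(a₂-a₁+1))^{C(b₂-b₁-1)∨0} for a numerical constant C. Equivalently, in the inductive form: |u(s,t)| ≤ (CV̄s)^{(t-2)∨0} when a₁ = b₁ = 1. -/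
/-- The tilted rectangle `R_{[a₁,a₂],[b₁,b₂]}`. -/
def tiltedRect (a₁ a₂ b₁ b₂ : ℤ) : Set (ℤ × ℤ) :=
  {p | a₁ ≤ p.1 ∧ p.1 ≤ a₂ ∧ b₁ ≤ p.2 ∧ p.2 ≤ b₂ ∧ Even (p.1 - p.2)}

/-- The west boundary `∂ʷR_{[a₁,a₂],[b₁,b₂]}`. -/
def westBoundary (a₁ a₂ b₁ b₂ : ℤ) : Set (ℤ × ℤ) :=
  tiltedRect a₁ a₂ b₁ (b₁ + 1) ∪ tiltedRect a₁ (a₁ + 1) b₁ b₂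

lemma mem_tiltedRect' {a₁ a₂ b₁ b₂ s t : ℤ} :
    (s, t) ∈ tiltedRect a₁ a₂ b₁ b₂ ↔
      a₁ ≤ s ∧ s ≤ a₂ ∧ b₁ ≤ t ∧ t ≤ b₂ ∧ (s - t) % 2 = 0 := by
  simp [tiltedRect, Int.even_iff]

lemma step_ineq (A q : ℝ) (m : ℕ) (hA : 16 ≤ A) (hq : 3 ≤ q) (hm : 1 ≤ m) :
    A * (A * (q - 1)) ^ (m - 1) + (A * (q - 2)) ^ m + (A * (q - 2)) ^ (m - 2)
      + (A * q) ^ (m - 2) ≤ (A * q) ^ m := by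
  match m, hm with
  | 1, _ =>
    norm_num
    nlinarith
  | (k+2), _ =>
    have h0 : (0:ℝ) ≤ A * (q - 2) := by nlinarith
    have h1 : (0:ℝ) ≤ A * (q - 1) := by nlinarith
    have hle2 : A * (q - 2) ≤ A * q := by nlinarith
    have hle1 : A * (q - 1) ≤ A * q := by nlinarith
    have hX1 : (1:ℝ) ≤ (A * q) ^ k := one_le_pow₀ (by nlinarith)
    have t1 : (A * (q - 1)) ^ (k + 1) ≤ (A * q) ^ (k + 1) := pow_le_pow_left₀ h1 hle1 _
    have t2 : (A * (q - 2)) ^ (k + 2) ≤ (A * (q - 2)) * (A * q) ^ (k + 1) := by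
      rw [pow_succ']
      exact mul_le_mul_of_nonneg_left (pow_le_pow_left₀ h0 hle2 _) h0
    have t3 : (A * (q - 2)) ^ k ≤ (A * q) ^ k := pow_le_pow_left₀ h0 hle2 _
    have e1 : (A * q) ^ (k + 1) = (A * q) * (A * q) ^ k := by ring
    have e2 : (A * q) ^ (k + 2) = (A * q) ^ 2 * (A * q) ^ k := by ring
    simp only [Nat.add_sub_cancel, show k + 2 - 1 = k + 1 from rfl]
    rw [e2]
    rw [e1] at t1 t2
    nlinarith [mul_le_mul_of_nonneg_left hX1 (show (0:ℝ) ≤ A * (A * q) - 2 by nlinarith),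
      mul_le_mul_of_nonneg_left t1 (show (0:ℝ) ≤ A by linarith)]

/-- There is a numerical constant `C` such that for `λ ∈ [-2,10]`,
`V̄ ≥ 2`, `V : ℤ² → {0,V̄}`, if `Hu = λu` holds in `R_{[a₁+1,a₂-1],[b₁+1,b₂-1]}` (in the
tilted-coordinate form) and `‖u‖_{ℓ∞(∂ʷR)} = 1` on the west boundary, then
`‖u‖_{ℓ∞(R)} ≤ (V̄(a₂-a₁+1))^{C((b₂-b₁-1)∨0)}`. -/
theorem tilted_rectangle_extension_bound :
    ∃ C : ℕ, 0 < C ∧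
      ∀ (lam Vbar : ℝ) (V : ℤ × ℤ → ℝ) (a₁ a₂ b₁ b₂ : ℤ) (u : ℤ × ℤ → ℝ),
        -2 ≤ lam → lam ≤ 10 → 2 ≤ Vbar → (∀ p, V p = 0 ∨ V p = Vbar) →
        a₁ ≤ a₂ → b₁ ≤ b₂ →
        (∀ s t : ℤ, (s - 1, t - 1) ∈ tiltedRect (a₁ + 1) (a₂ - 1) (b₁ + 1) (b₂ - 1) →
          u (s, t) = (4 + V (s - 1, t - 1) - lam) * u (s - 1, t - 1)
            - u (s - 2, t) - u (s - 2, t - 2) - u (s, t - 2)) →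
        (∀ p ∈ westBoundary a₁ a₂ b₁ b₂, |u p| ≤ 1) →
        (∃ p ∈ westBoundary a₁ a₂ b₁ b₂, |u p| = 1) →
        ∀ p ∈ tiltedRect a₁ a₂ b₁ b₂,
          |u p| ≤ (Vbar * ((a₂ : ℝ) - a₁ + 1)) ^ ((C : ℤ) * max (b₂ - b₁ - 1) 0) := by
  refine ⟨4, by norm_num, ?_⟩
  intro lam Vbar V a₁ a₂ b₁ b₂ u hlam1 hlam2 hV2 hV ha hb hrec hbd _hex
  set A : ℝ := 8 * Vbar with hAdef
  have hA16 : (16:ℝ) ≤ A := by rw [hAdef]; linarith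
  have hA0 : (0:ℝ) ≤ A := by linarith
  -- boundary bound
  have hbW : ∀ s t : ℤ, (s, t) ∈ tiltedRect a₁ a₂ b₁ b₂ → (t ≤ b₁ + 1 ∨ s ≤ a₁ + 1) →
      |u (s, t)| ≤ 1 := by
    intro s t hm hc
    rw [mem_tiltedRect'] at hm
    apply hbd
    rcases hc with hc | hc
    · exact Or.inl (mem_tiltedRect'.2 ⟨hm.1, hm.2.1, hm.2.2.1, hc, hm.2.2.2.2⟩)
    · exact Or.inr (mem_tiltedRect'.2 ⟨hm.1, hc, hm.2.2.1, hm.2.2.2.1, hm.2.2.2.2⟩)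
  have base_ge : ∀ s : ℤ, a₁ ≤ s → (1:ℝ) ≤ A * ((s:ℝ) - a₁ + 1) := by
    intro s hs
    have : (1:ℝ) ≤ (s:ℝ) - a₁ + 1 := by
      have : (a₁:ℝ) ≤ s := by exact_mod_cast hs
      linarith
    nlinarith
  -- key induction
  have key : ∀ n : ℕ, ∀ s t : ℤ, s + t - a₁ - b₁ ≤ (n:ℤ) →
      (s, t) ∈ tiltedRect a₁ a₂ b₁ b₂ →
      |u (s, t)| ≤ (A * ((s:ℝ) - a₁ + 1)) ^ (t - b₁ - 1).toNat := by
    intro n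
    induction n with
    | zero =>
      intro s t hn hm
      have hm' := mem_tiltedRect'.1 hm
      have ht : t ≤ b₁ + 1 := by omega
      have : (t - b₁ - 1).toNat = 0 := by omega
      rw [this, pow_zero]
      exact hbW s t hm (Or.inl ht)
    | succ n ih =>
      intro s t hn hm
      have hm' := mem_tiltedRect'.1 hm
      obtain ⟨hs1, hs2, ht1, ht2, hpar⟩ := hm'
      by_cases hbc : t ≤ b₁ + 1 ∨ s ≤ a₁ + 1
      · calc |u (s, t)| ≤ 1 := hbW s t hm hbc
          _ ≤ _ := one_le_pow₀ (base_ge s hs1)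
      · push_neg at hbc
        obtain ⟨htI, hsI⟩ := hbc
        -- interior point
        have hmem : (s - 1, t - 1) ∈ tiltedRect (a₁ + 1) (a₂ - 1) (b₁ + 1) (b₂ - 1) :=
          mem_tiltedRect'.2 ⟨by omega, by omega, by omega, by omega, by omega⟩
        have hre := hrec s t hmem
        set m : ℕ := (t - b₁ - 1).toNat with hmdef
        have hm1 : 1 ≤ m := by omega
        -- IH applications
        have ih1 := ih (s - 1) (t - 1) (by push_cast; omega)
          (mem_tiltedRect'.2 ⟨by omega, by omega, by omega, by omega, by omega⟩)
        have ih2 := ih (s - 2) t (by push_cast; omega)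
          (mem_tiltedRect'.2 ⟨by omega, by omega, by omega, by omega, by omega⟩)
        have ih3 := ih (s - 2) (t - 2) (by push_cast; omega)
          (mem_tiltedRect'.2 ⟨by omega, by omega, by omega, by omega, by omega⟩)
        have ih4 := ih s (t - 2) (by push_cast; omega)
          (mem_tiltedRect'.2 ⟨by omega, by omega, by omega, by omega, by omega⟩)
        have e1 : (t - 1 - b₁ - 1).toNat = m - 1 := by omega
        have e2 : (t - 2 - b₁ - 1).toNat = m - 2 := by omega
        rw [e1] at ih1
        rw [e2] at ih3 ih4
        have c1 : ((s - 1 : ℤ) : ℝ) - a₁ + 1 = ((s:ℝ) - a₁ + 1) - 1 := by push_cast; ring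
        have c2 : ((s - 2 : ℤ) : ℝ) - a₁ + 1 = ((s:ℝ) - a₁ + 1) - 2 := by push_cast; ring
        rw [c1] at ih1
        rw [c2] at ih2 ih3
        set q : ℝ := (s:ℝ) - a₁ + 1 with hqdef
        have hq3 : (3:ℝ) ≤ q := by
          have : (a₁:ℝ) + 2 ≤ (s:ℝ) := by exact_mod_cast (show a₁ + 2 ≤ s by omega)
          rw [hqdef]; linarith
        -- coefficient bound
        have habs : |4 + V (s - 1, t - 1) - lam| ≤ A := by
          rcases hV (s - 1, t - 1) with h | h <;> rw [h, abs_le] <;>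
            constructor <;> linarith
        -- triangle inequality
        have tri : |u (s, t)| ≤ |4 + V (s - 1, t - 1) - lam| * |u (s - 1, t - 1)|
            + |u (s - 2, t)| + |u (s - 2, t - 2)| + |u (s, t - 2)| := by
          rw [hre]
          have h1 : |(4 + V (s - 1, t - 1) - lam) * u (s - 1, t - 1) - u (s - 2, t)
              - u (s - 2, t - 2) - u (s, t - 2)|
              ≤ |(4 + V (s - 1, t - 1) - lam) * u (s - 1, t - 1) - u (s - 2, t)
                - u (s - 2, t - 2)| + |u (s, t - 2)| := abs_sub _ _
          have h2 : |(4 + V (s - 1, t - 1) - lam) * u (s - 1, t - 1) - u (s - 2, t)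
              - u (s - 2, t - 2)|
              ≤ |(4 + V (s - 1, t - 1) - lam) * u (s - 1, t - 1) - u (s - 2, t)|
                + |u (s - 2, t - 2)| := abs_sub _ _
          have h3 : |(4 + V (s - 1, t - 1) - lam) * u (s - 1, t - 1) - u (s - 2, t)|
              ≤ |(4 + V (s - 1, t - 1) - lam) * u (s - 1, t - 1)| + |u (s - 2, t)| :=
            abs_sub _ _
          rw [abs_mul] at h3
          linarith
        have mul1 : |4 + V (s - 1, t - 1) - lam| * |u (s - 1, t - 1)|
            ≤ A * (A * (q - 1)) ^ (m - 1) :=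
          mul_le_mul habs ih1 (abs_nonneg _) hA0
        calc |u (s, t)| ≤ A * (A * (q - 1)) ^ (m - 1) + (A * (q - 2)) ^ m
              + (A * (q - 2)) ^ (m - 2) + (A * q) ^ (m - 2) := by linarith
          _ ≤ (A * q) ^ m := step_ineq A q m hA16 hq3 hm1
  -- conclude
  rintro ⟨s, t⟩ hp
  have hp' := mem_tiltedRect'.1 hp
  obtain ⟨hs1, hs2, ht1, ht2, -⟩ := hp'
  have h0 := key (s + t - a₁ - b₁).toNat s t (by omega) hp
  have hsR : (s:ℝ) ≤ (a₂:ℝ) := by exact_mod_cast hs2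
  have ha1R : (a₁:ℝ) ≤ (s:ℝ) := by exact_mod_cast hs1
  set x : ℝ := Vbar * ((a₂:ℝ) - a₁ + 1) with hxdef
  have hx2 : (2:ℝ) ≤ x := by
    have : (1:ℝ) ≤ (a₂:ℝ) - a₁ + 1 := by linarith
    nlinarith
  have step1 : (A * ((s:ℝ) - a₁ + 1)) ^ (t - b₁ - 1).toNat
      ≤ (A * ((a₂:ℝ) - a₁ + 1)) ^ (t - b₁ - 1).toNat :=
    pow_le_pow_left₀ (by nlinarith [base_ge s hs1]) (by nlinarith) _
  have step2 : (A * ((a₂:ℝ) - a₁ + 1)) ^ (t - b₁ - 1).toNat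
      ≤ (A * ((a₂:ℝ) - a₁ + 1)) ^ (b₂ - b₁ - 1).toNat := by
    apply pow_le_pow_right₀ (base_ge a₂ ha)
    omega
  have step3 : (A * ((a₂:ℝ) - a₁ + 1)) ^ (b₂ - b₁ - 1).toNat
      ≤ (x ^ 4) ^ (b₂ - b₁ - 1).toNat := by
    apply pow_le_pow_left₀ (le_trans zero_le_one (base_ge a₂ ha))
    have h3 : (8:ℝ) ≤ x ^ 3 := by
      have := pow_le_pow_left₀ (show (0:ℝ) ≤ 2 by norm_num) hx2 3
      norm_num at this
      linarith
    have h4 : 8 * x ≤ x ^ 4 := by nlinarith [mul_le_mul_of_nonneg_left h3 (show (0:ℝ) ≤ x by linarith)]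
    calc A * ((a₂:ℝ) - a₁ + 1) = 8 * x := by rw [hAdef, hxdef]; ring
      _ ≤ x ^ 4 := h4
  have hexp : ((4:ℕ):ℤ) * max (b₂ - b₁ - 1) 0 = ((4 * (b₂ - b₁ - 1).toNat : ℕ) : ℤ) := by
    push_cast
    rw [Int.toNat_eq_max]
  calc |u (s, t)| ≤ (x ^ 4) ^ (b₂ - b₁ - 1).toNat := le_trans h0 (le_trans step1 (le_trans step2 step3))
    _ = x ^ (4 * (b₂ - b₁ - 1).toNat) := by rw [pow_mul]
    _ = x ^ (((4:ℕ):ℤ) * max (b₂ - b₁ - 1) 0) := by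
        rw [hexp, zpow_natCast]
end

section
/- Let λ₀ ∈ [0,8], V̄ > 2, V : ℤ² → {0,V̄}, and positive integers a, k, k' with k < k'. Let M = M^{k,k'}_{[1,a]} be the transfer operator from ℓ²(R_{[1,a],{k}}) to ℓ²(R_{[1,a],{k'}}) obtained by extending boundary data (supported only on the row t = k, zero on the rest of the west boundary of R_{[1,a],[k-1,k']}) via the tilted eigenvalue equation and restricting to the row t = k'. Then for 4 ≤ s, s' ≤ a with (s,k), (s',k') on the tilted lattice: the matrix entry ⟨δ_{(s',k')}, M δ_{(s,k)}⟩ vanishes if s' < s, has absolute value exactly 1 if s' = s (indeed equals (-1)^{(k'-k)/2} when k,k' have the same parity), and is bounded in absolute value by ((k'-k+2)V̄)^{C₁(s'-s)} if s' > s, where C₁ is a numerical constant. -/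
private lemma aux_key (B T : ℝ) (hB6 : 6 ≤ B) (hT1 : 1 ≤ T) (hTb : T + 1 ≤ B) :
    B * ((B + T) * (B*B*B)) + (B + T + 1) + (B + T - 1)
      + (B + T - 1) * (B*B*B*B*B*B) ≤ (B + T + 1) * (B*B*B*B*B*B) := by
  have hB0 : (0:ℝ) < B := by linarith
  have h1 : (1:ℝ) ≤ B := by linarith
  have h4 : (0:ℝ) ≤ B*B*B*B := by positivity
  have h5 : (0:ℝ) ≤ B*B*B*B*B := by positivity
  have h6 : (0:ℝ) ≤ B*B*B*B*B*B := by positivity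
  have k2 : (B+T)*(B*B*B*B) ≤ (2*B)*(B*B*B*B) :=
    mul_le_mul_of_nonneg_right (by linarith) h4
  have k4 : 6*(B*B*B*B*B) ≤ B*(B*B*B*B*B) := mul_le_mul_of_nonneg_right hB6 h5
  have hb2 : (1:ℝ) ≤ B*B := by nlinarith
  have hb4 : (1:ℝ) ≤ (B*B)*(B*B) := by nlinarith
  have k5 : B * 1 ≤ B * ((B*B)*(B*B)) := mul_le_mul_of_nonneg_left hb4 hB0.le
  linarith [k2, k4, k5, h6]

private lemma aux_final (B T F x y z w U : ℝ) (hB6 : 6 ≤ B) (hT1 : 1 ≤ T)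
    (hTb : T + 1 ≤ B) (hF0 : 0 ≤ F)
    (htri : U ≤ B * x + y + z + w)
    (t1 : x ≤ (B + T) * (F * (B*B*B)))
    (t2 : y ≤ (B + T + 1) * F)
    (t3 : z ≤ (B + T - 1) * F)
    (t4 : w ≤ (B + T - 1) * (F * (B*B*B*B*B*B))) :
    U ≤ (B + T + 1) * (F * (B*B*B*B*B*B)) := by
  have hB0 : (0:ℝ) < B := by linarith
  have key := aux_key B T hB6 hT1 hTb
  have keyF := mul_le_mul_of_nonneg_right key hF0
  have m1 := mul_le_mul_of_nonneg_left t1 hB0.le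
  nlinarith [m1, t2, t3, t4, htri, keyF]

set_option maxHeartbeats 1000000 in
/-- Triangular structure of the transfer operator `M^{k,k'}_{[1,a]}`:
there is a numerical constant `C₁` such that, for `λ₀ ∈ [0,8]`, `V̄ > 2`,
`V : ℤ² → {0,V̄}`, `0 < k < k'`, and a function `u` on the tilted rectangle
`R_{[1,a],[k-1,k']}` equal to `δ_{(s,k)}` on the west boundary and satisfying the tilted
eigenvalue equation in `R_{[2,a-1],[k,k'-1]}` (this is the column of `M` indexed by
`(s,k)`), the entries `u(s',k')` of `M δ_{(s,k)}` satisfy: they vanish for `s' < s`,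
equal `(-1)^{(k'-k)/2}` (so have absolute value exactly `1`) for `s' = s`, and are
bounded by `((k'-k+2)V̄)^{C₁(s'-s)}` for `s' > s`, where `4 ≤ s, s' ≤ a` and
`(s,k), (s',k')` lie on the tilted lattice. -/
theorem transfer_operator_entries :
    ∃ C₁ : ℕ, 0 < C₁ ∧
      ∀ (lam Vbar : ℝ) (V : ℤ × ℤ → ℝ) (a k k' : ℤ),
        0 ≤ lam → lam ≤ 8 → 2 < Vbar → (∀ p, V p = 0 ∨ V p = Vbar) →
        0 < k → k < k' → 0 < a →
        ∀ s : ℤ, Even (s - k) → 4 ≤ s → s ≤ a →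
        ∀ u : ℤ × ℤ → ℝ,
          (∀ p ∈ westBoundary 1 a (k - 1) k',
            u p = if p = (s, k) then (1 : ℝ) else 0) →
          (∀ σ τ : ℤ, (σ - 1, τ - 1) ∈ tiltedRect 2 (a - 1) k (k' - 1) →
            u (σ, τ) = (4 + V (σ - 1, τ - 1) - lam) * u (σ - 1, τ - 1)
              - u (σ - 2, τ) - u (σ - 2, τ - 2) - u (σ, τ - 2)) →
          ∀ s' : ℤ, Even (s' - k') → 4 ≤ s' → s' ≤ a →
            (s' < s → u (s', k') = 0) ∧
            (s' = s → Even (k' - k) ∧ u (s', k') = (-1 : ℝ) ^ ((k' - k) / 2) ∧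
              |u (s', k')| = 1) ∧
            (s < s' → |u (s', k')| ≤
              (((k' : ℝ) - k + 2) * Vbar) ^ ((C₁ : ℤ) * (s' - s))) := by
  refine ⟨4, by norm_num, ?_⟩
  intro lam Vbar V a k k' hlam0 hlam8 hVbar hV hk hkk' ha s hse hs4 hsa u hbd hrec
    s' hs'e hs'4 hs'a
  have hkR : (k:ℝ) + 1 ≤ (k':ℝ) := by exact_mod_cast hkk'
  set B : ℝ := ((k':ℝ) - k + 2) * Vbar with hBdef
  have hk2 : (3:ℝ) ≤ (k':ℝ) - k + 2 := by linarith
  have hB6 : (6:ℝ) ≤ B := by nlinarith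
  have hB0 : (0:ℝ) < B := by linarith
  have hBne : B ≠ 0 := ne_of_gt hB0
  have hcoef : ∀ p, |4 + V p - lam| ≤ B := by
    intro p
    rcases hV p with h | h <;> rw [h, abs_le] <;> constructor <;> nlinarith
  have habs : ∀ x y : ℝ, |x - y| ≤ |x| + |y| := fun x y => abs_sub x y
  obtain ⟨rs, hrs⟩ := hse
  -- Claim A: vanishing strictly left of column s
  have hA : ∀ n : ℕ, ∀ σ τ : ℤ, σ + τ ≤ (n:ℤ) → 1 ≤ σ → σ ≤ a → k - 1 ≤ τ → τ ≤ k' →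
      Even (σ - τ) → σ < s → u (σ, τ) = 0 := by
    intro n
    induction n using Nat.strong_induction_on with
    | _ n ih =>
      intro σ τ hn h1 h2 h3 h4 hev hlt
      rcases le_or_gt τ k with hτ | hτ
      · have hm : (σ, τ) ∈ westBoundary 1 a (k-1) k' :=
          Or.inl ⟨h1, h2, h3, by omega, hev⟩
        rw [hbd _ hm, if_neg (by simp only [Prod.mk.injEq]; omega)]
      · rcases le_or_gt σ 2 with hσ | hσ
        · have hm : (σ, τ) ∈ westBoundary 1 a (k-1) k' :=
            Or.inr ⟨h1, by omega, h3, h4, hev⟩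
          rw [hbd _ hm, if_neg (by simp only [Prod.mk.injEq]; omega)]
        · obtain ⟨r, hr⟩ := hev
          have hmem : (σ - 1, τ - 1) ∈ tiltedRect 2 (a-1) k (k'-1) :=
            ⟨by omega, by omega, by omega, by omega, ⟨r, by omega⟩⟩
          rw [hrec σ τ hmem,
              ih (n-2) (by omega) (σ-1) (τ-1) (by omega) (by omega) (by omega)
                (by omega) (by omega) ⟨r, by omega⟩ (by omega),
              ih (n-2) (by omega) (σ-2) τ (by omega) (by omega) (by omega)
                h3 h4 ⟨r-1, by omega⟩ (by omega),
              ih (n-2) (by omega) (σ-2) (τ-2) (by omega) (by omega) (by omega)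
                (by omega) (by omega) ⟨r, by omega⟩ (by omega),
              ih (n-2) (by omega) σ (τ-2) (by omega) h1 h2 (by omega) (by omega)
                ⟨r+1, by omega⟩ hlt]
          ring
  have hA' : ∀ σ τ : ℤ, 1 ≤ σ → σ ≤ a → k - 1 ≤ τ → τ ≤ k' → Even (σ - τ) → σ < s →
      u (σ, τ) = 0 := fun σ τ h1 h2 h3 h4 hev hlt =>
    hA (σ + τ).toNat σ τ (by omega) h1 h2 h3 h4 hev hlt
  -- Claim B: diagonal values
  have hBc : ∀ n : ℕ, ∀ τ : ℤ, τ = k + 2 * n → τ ≤ k' → u (s, τ) = (-1:ℝ)^n := by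
    intro n
    induction n with
    | zero =>
      intro τ hτ _
      have hτk : τ = k := by push_cast at hτ; omega
      rw [hτk]
      have hm : (s, k) ∈ westBoundary 1 a (k-1) k' :=
        Or.inl ⟨by omega, hsa, by omega, by omega, ⟨rs, by omega⟩⟩
      rw [hbd _ hm, if_pos rfl]; norm_num
    | succ m ihm =>
      intro τ hτ hτk'
      push_cast at hτ
      have hmem : (s - 1, τ - 1) ∈ tiltedRect 2 (a-1) k (k'-1) :=
        ⟨by omega, by omega, by omega, by omega, ⟨rs - m - 1, by omega⟩⟩
      rw [hrec s τ hmem,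
          hA' (s-1) (τ-1) (by omega) (by omega) (by omega) (by omega)
            ⟨rs - m - 1, by omega⟩ (by omega),
          hA' (s-2) τ (by omega) (by omega) (by omega) (by omega)
            ⟨rs - m - 2, by omega⟩ (by omega),
          hA' (s-2) (τ-2) (by omega) (by omega) (by omega) (by omega)
            ⟨rs - m - 1, by omega⟩ (by omega),
          ihm (τ-2) (by push_cast; omega) (by omega)]
      ring
  -- Claim C: growth bound
  have hTB : ((k':ℝ) - k + 1) ≤ B := by nlinarith
  have hC : ∀ n : ℕ, ∀ σ τ : ℤ, σ + τ ≤ (n:ℤ) → s ≤ σ → σ ≤ a → k - 1 ≤ τ → τ ≤ k' →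
      Even (σ - τ) →
      |u (σ, τ)| ≤ (B + ((τ:ℝ) - k + 1)) * B ^ (3*(σ-s) - 1 : ℤ) := by
    intro n
    induction n using Nat.strong_induction_on with
    | _ n ih =>
      intro σ τ hn hsσ h2 h3 h4 hev
      have hτR : ((k:ℝ) - 1) ≤ (τ:ℝ) := by exact_mod_cast h3
      have hτR' : (τ:ℝ) ≤ (k':ℝ) := by exact_mod_cast h4
      have hDpos : (0:ℝ) < B + ((τ:ℝ) - k + 1) := by linarith
      rcases eq_or_lt_of_le hsσ with heq | hlt
      · -- diagonal
        rcases heq with rfl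
        obtain ⟨r, hr⟩ := hev
        have hτ2 : τ = k + 2 * ((rs - r).toNat : ℤ) := by omega
        have hval := hBc (rs - r).toNat τ hτ2 h4
        rw [hval, abs_pow, abs_neg, abs_one, one_pow]
        rw [show (3*(s-s) - 1 : ℤ) = -1 by ring, zpow_neg_one]
        have hτk : (k:ℝ) ≤ (τ:ℝ) := by exact_mod_cast (by omega : k ≤ τ)
        calc (1:ℝ) = B * B⁻¹ := (mul_inv_cancel₀ hBne).symm
          _ ≤ (B + ((τ:ℝ) - k + 1)) * B⁻¹ :=
              mul_le_mul_of_nonneg_right (by linarith) (inv_nonneg.mpr hB0.le)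
      · rcases le_or_gt τ k with hτ | hτ
        · -- boundary row, zero
          have hz : u (σ, τ) = 0 := by
            have hm : (σ, τ) ∈ westBoundary 1 a (k-1) k' :=
              Or.inl ⟨by omega, h2, h3, by omega, hev⟩
            rw [hbd _ hm, if_neg (by simp only [Prod.mk.injEq]; omega)]
          rw [hz, abs_zero]
          exact mul_nonneg hDpos.le (zpow_nonneg hB0.le _)
        · -- recurrence case
          obtain ⟨r, hr⟩ := hev
          have hmem : (σ - 1, τ - 1) ∈ tiltedRect 2 (a-1) k (k'-1) :=
            ⟨by omega, by omega, by omega, by omega, ⟨r, by omega⟩⟩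
          set c : ℝ := 4 + V (σ-1, τ-1) - lam with hc
          have htri : |u (σ, τ)| ≤ B * |u (σ-1, τ-1)| + |u (σ-2, τ)| + |u (σ-2, τ-2)|
              + |u (σ, τ-2)| := by
            rw [hrec σ τ hmem, ← hc]
            have e1 := habs (c * u (σ-1, τ-1) - u (σ-2, τ) - u (σ-2, τ-2)) (u (σ, τ-2))
            have e2 := habs (c * u (σ-1, τ-1) - u (σ-2, τ)) (u (σ-2, τ-2))
            have e3 := habs (c * u (σ-1, τ-1)) (u (σ-2, τ))
            have e4 : |c * u (σ-1, τ-1)| ≤ B * |u (σ-1, τ-1)| := by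
              rw [abs_mul]
              exact mul_le_mul_of_nonneg_right (hcoef _) (abs_nonneg _)
            linarith
          set F : ℝ := B ^ (3*(σ-s) - 7 : ℤ) with hF
          have hF0 : (0:ℝ) < F := by positivity
          have hB3 : B ^ (3:ℤ) = B * B * B := by
            rw [show (3:ℤ) = ((3:ℕ):ℤ) by rfl, zpow_natCast]; ring
          have hB6' : B ^ (6:ℤ) = B * B * B * B * B * B := by
            rw [show (6:ℤ) = ((6:ℕ):ℤ) by rfl, zpow_natCast]; ring
          have hE1 : B ^ (3*(σ-1-s) - 1 : ℤ) = F * (B * B * B) := by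
            rw [hF, ← hB3, ← zpow_add₀ hBne]; congr 1; ring
          have hE2 : B ^ (3*(σ-2-s) - 1 : ℤ) = F := by
            rw [hF]; congr 1; ring
          have hE0 : B ^ (3*(σ-s) - 1 : ℤ) = F * (B * B * B * B * B * B) := by
            rw [hF, ← hB6', ← zpow_add₀ hBne]; congr 1; ring
          -- term bounds
          have t1 : |u (σ-1, τ-1)| ≤ (B + ((τ:ℝ) - k)) * (F * (B * B * B)) := by
            have := ih (n-2) (by omega) (σ-1) (τ-1) (by omega) (by omega) (by omega)
              (by omega) (by omega) ⟨r, by omega⟩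
            rw [hE1] at this
            push_cast at this
            convert this using 2
            ring
          have t2 : |u (σ-2, τ)| ≤ (B + ((τ:ℝ) - k + 1)) * F := by
            rcases lt_or_ge (σ-2) s with hcase | hcase
            · rw [hA' (σ-2) τ (by omega) (by omega) h3 h4 ⟨r-1, by omega⟩ hcase, abs_zero]
              exact mul_nonneg hDpos.le hF0.le
            · have := ih (n-2) (by omega) (σ-2) τ (by omega) hcase (by omega) h3 h4
                ⟨r-1, by omega⟩
              rw [hE2] at this
              exact this
          have t3 : |u (σ-2, τ-2)| ≤ (B + ((τ:ℝ) - k - 1)) * F := by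
            rcases lt_or_ge (σ-2) s with hcase | hcase
            · rw [hA' (σ-2) (τ-2) (by omega) (by omega) (by omega) (by omega)
                ⟨r, by omega⟩ hcase, abs_zero]
              have : (0:ℝ) ≤ B + ((τ:ℝ) - k - 1) := by linarith
              exact mul_nonneg this hF0.le
            · have := ih (n-2) (by omega) (σ-2) (τ-2) (by omega) hcase (by omega)
                (by omega) (by omega) ⟨r, by omega⟩
              rw [hE2] at this
              push_cast at this
              convert this using 2
              ring
          have t4 : |u (σ, τ-2)| ≤ (B + ((τ:ℝ) - k - 1)) * (F * (B * B * B * B * B * B)) := by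
            have := ih (n-2) (by omega) σ (τ-2) (by omega) hsσ h2 (by omega) (by omega)
              ⟨r+1, by omega⟩
            rw [hE0] at this
            push_cast at this
            convert this using 2
            ring
          rw [hE0]
          have hT1 : (1:ℝ) ≤ (τ:ℝ) - k := by
            have : (k:ℝ) + 1 ≤ (τ:ℝ) := by exact_mod_cast hτ
            linarith
          have hTb : ((τ:ℝ) - k) + 1 ≤ B := by linarith
          have hfin := aux_final B ((τ:ℝ) - k) F (|u (σ-1, τ-1)|) (|u (σ-2, τ)|)
            (|u (σ-2, τ-2)|) (|u (σ, τ-2)|) (|u (σ, τ)|) hB6 hT1 hTb hF0.le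
            (by linarith [htri]) (by linarith [t1]) (by linarith [t2])
            (by linarith [t3]) (by linarith [t4])
          linarith [hfin]
  -- now the three conclusions
  refine ⟨?_, ?_, ?_⟩
  · intro hlt
    exact hA' s' k' (by omega) hs'a (by omega) le_rfl hs'e hlt
  · intro heq
    subst heq
    obtain ⟨r', hr'⟩ := hs'e
    have hev : Even (k' - k) := ⟨rs - r', by omega⟩
    have hn : k' = k + 2 * (((rs - r').toNat : ℤ)) := by omega
    have hval := hBc (rs - r').toNat k' hn le_rfl
    have hdiv : (k' - k) / 2 = (((rs - r').toNat : ℤ)) := by omega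
    refine ⟨hev, ?_, ?_⟩
    · rw [hval, hdiv, zpow_natCast]
    · rw [hval, abs_pow, abs_neg, abs_one, one_pow]
  · intro hlt
    have hCfin := hC (s' + k').toNat s' k' (by omega) hlt.le hs'a (by omega) le_rfl hs'e
    have hcast : ((4:ℕ):ℤ) = (4:ℤ) := by norm_num
    rw [hcast]
    have hd1 : (1:ℤ) ≤ s' - s := by omega
    have hsplit : B ^ (4*(s'-s) : ℤ) = B ^ (3*(s'-s) - 1 : ℤ) * B ^ (s'-s+1 : ℤ) := by
      rw [← zpow_add₀ hBne]; congr 1; ring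
    have hmono : B ^ (2:ℤ) ≤ B ^ (s'-s+1 : ℤ) :=
      zpow_le_zpow_right₀ (by linarith) (by omega)
    have hB2 : B ^ (2:ℤ) = B * B := by
      rw [show (2:ℤ) = ((2:ℕ):ℤ) by rfl, zpow_natCast]; ring
    have hzn : (0:ℝ) ≤ B ^ (3*(s'-s) - 1 : ℤ) := zpow_nonneg hB0.le _
    calc |u (s', k')| ≤ (B + ((k':ℝ) - k + 1)) * B ^ (3*(s'-s) - 1 : ℤ) := hCfin
      _ ≤ (B * B) * B ^ (3*(s'-s) - 1 : ℤ) := by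
          have h2B : B + ((k':ℝ) - k + 1) ≤ B*B := by
            nlinarith [mul_le_mul_of_nonneg_right hB6 hB0.le]
          exact mul_le_mul_of_nonneg_right h2B hzn
      _ ≤ B ^ (s'-s+1 : ℤ) * B ^ (3*(s'-s) - 1 : ℤ) := by
          rw [← hB2]; exact mul_le_mul_of_nonneg_right hmono hzn
      _ = B ^ (4*(s'-s) : ℤ) := by rw [hsplit]; ring
end

section
/- Let λ₀ ∈ [0,8], V̄ > 2, positive integers a, k, k' with k < k' of the same parity. Let S₁ ⊆ R_{[4,a-1],{k'}} and S₂ = {(s,k) : (s,k') ∈ S₁}. Then the restricted transfer operator P_{S₁} M^{k,k'}_{[1,a]} I_{S₂} (the submatrix of the transfer matrix with rows S₁ and columns S₂) is invertible with operator norm bound ‖(P_{S₁} M^{k,k'}_{[1,a]} I_{S₂})^{-1}‖ ≤ a(2V̄(k'-k+2))^{2C₁a}, where C₁ is the constant in the bound on matrix entries of the transfer operator. -/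
/-!
The column `u s` of the transfer matrix vanishes west of column `s`, since the recursion only
looks west and the boundary data vanish there; along column `s` itself the recursion reduces to
`u s (s, τ) = -u s (s, τ - 2)`, so the diagonal entries are `±1`; and induction on `σ + τ` bounds
`|u s (σ, τ)|` by `(V̄ (τ - k + 2)) ^ (2 (σ - s))`. So the restricted transfer matrix is lower
triangular with unit diagonal and entries bounded by `K ^ (i - j)`, `K = (V̄ (k' - k + 2))²`.
Back substitution then gives `|M⁻¹ i j| ≤ (2K) ^ (i - j)`, because `∑ 2 ^ (l - j)` over
`j ≤ l < i` is less than `2 ^ (i - j)`, and the operator norm is at most the dimension times the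
largest entry.
-/

open Finset

theorem mem_tiltedRect_iff {a₁ a₂ b₁ b₂ σ τ : ℤ} :
    (σ, τ) ∈ tiltedRect a₁ a₂ b₁ b₂ ↔
      a₁ ≤ σ ∧ σ ≤ a₂ ∧ b₁ ≤ τ ∧ τ ≤ b₂ ∧ (σ - τ) % 2 = 0 := by
  simp [tiltedRect, Int.even_iff]

theorem mem_westBoundary_iff {a₁ a₂ b₁ b₂ σ τ : ℤ} :
    (σ, τ) ∈ westBoundary a₁ a₂ b₁ b₂ ↔
      (σ, τ) ∈ tiltedRect a₁ a₂ b₁ (b₁ + 1) ∨ (σ, τ) ∈ tiltedRect a₁ (a₁ + 1) b₁ b₂ :=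
  Iff.rfl

theorem mem_westBoundary_or_sub_one_mem {a k k' σ τ : ℤ}
    (h : (σ, τ) ∈ tiltedRect 1 a (k - 1) k') :
    (σ, τ) ∈ westBoundary 1 a (k - 1) k' ∨ (σ - 1, τ - 1) ∈ tiltedRect 2 (a - 1) k (k' - 1) := by
  simp only [mem_westBoundary_iff, mem_tiltedRect_iff] at h ⊢
  omega

theorem tiltedRect_induction {a k k' : ℤ} {P : ℤ × ℤ → Prop}
    (boundary : ∀ p ∈ westBoundary 1 a (k - 1) k', P p)
    (step : ∀ σ τ, (σ - 1, τ - 1) ∈ tiltedRect 2 (a - 1) k (k' - 1) →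
      P (σ - 1, τ - 1) → P (σ - 2, τ) → P (σ - 2, τ - 2) → P (σ, τ - 2) → P (σ, τ)) :
    ∀ p ∈ tiltedRect 1 a (k - 1) k', P p := by
  suffices h : ∀ n : ℕ, ∀ σ τ, (σ, τ) ∈ tiltedRect 1 a (k - 1) k' → σ + τ < k + n → P (σ, τ) from
    fun ⟨σ, τ⟩ hp => h (σ + τ - k).toNat.succ σ τ hp (by omega)
  intro n
  induction n with
  | zero => intro σ τ hp hn; rw [mem_tiltedRect_iff] at hp; omega
  | succ n ih =>
    intro σ τ hp hn
    rcases mem_westBoundary_or_sub_one_mem hp with hb | hi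
    · exact boundary _ hb
    · rw [mem_tiltedRect_iff] at hi
      refine step σ τ (mem_tiltedRect_iff.2 hi) (ih _ _ ?_ ?_) (ih _ _ ?_ ?_) (ih _ _ ?_ ?_)
        (ih _ _ ?_ ?_) <;> first | (rw [mem_tiltedRect_iff]; omega) | omega

/-- `f` is the extension `u s` of the boundary data `δ_{(s,k)}`; `c` stands for `4 + V - λ₀`. -/
structure IsDeltaExtension (c : ℤ × ℤ → ℝ) (a k k' s : ℤ) (f : ℤ × ℤ → ℝ) : Prop where
  boundary : ∀ p ∈ westBoundary 1 a (k - 1) k', f p = if p = (s, k) then 1 else 0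
  step : ∀ σ τ, (σ - 1, τ - 1) ∈ tiltedRect 2 (a - 1) k (k' - 1) →
    f (σ, τ) = c (σ - 1, τ - 1) * f (σ - 1, τ - 1) - f (σ - 2, τ) - f (σ - 2, τ - 2) - f (σ, τ - 2)

noncomputable def envelope (n : ℤ) (x : ℝ) : ℝ := if 0 ≤ n then x ^ (2 * n) else 0

theorem envelope_nonneg (n : ℤ) (x : ℝ) : 0 ≤ envelope n x := by
  unfold envelope
  split_ifs
  exacts [(even_two_mul n).zpow_nonneg x, le_rfl]

theorem envelope_of_neg {n : ℤ} (hn : n < 0) (x : ℝ) : envelope n x = 0 :=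
  if_neg hn.not_ge

theorem envelope_le_zpow {n : ℤ} {x y : ℝ} (hy : 0 ≤ y) (hyx : y ≤ x) :
    envelope n y ≤ x ^ (2 * n) := by
  unfold envelope
  split_ifs with hn
  · exact zpow_le_zpow_left₀ (by omega) hy hyx
  · exact zpow_nonneg (hy.trans hyx) _

theorem envelope_eq_sq_mul {n : ℤ} (hn : 1 ≤ n) (y : ℝ) :
    envelope n y = y ^ 2 * envelope (n - 1) y := by
  rw [envelope, envelope, if_pos (by omega), if_pos (by omega),
    show 2 * n = 2 + 2 * (n - 1) by ring, zpow_add' (Or.inr (Or.inl (by omega))), zpow_ofNat]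

theorem envelope_step {B x c : ℝ} (hB : 1 ≤ B) (hx : 3 * B ≤ x) (hc : |c| ≤ 4 * B) (n : ℤ) :
    |c| * envelope (n - 1) (x - B) + envelope (n - 2) x + envelope (n - 2) (x - 2 * B)
      + envelope n (x - 2 * B) ≤ envelope n x := by
  rcases lt_trichotomy n 0 with hn | rfl | hn
  · simp [envelope_of_neg, hn, show n - 1 < 0 by omega, show n - 2 < 0 by omega]
  · simp [envelope]
  have hx0 : 0 < x := by linarith
  set X := x ^ (2 * (n - 2))
  have hXpos : 0 < X := zpow_pos hx0 _
  have hshift : ∀ m : ℕ, x ^ (2 * (n - 2) + m) = X * x ^ m := fun m => by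
    rw [zpow_add₀ hx0.ne', zpow_natCast]
  have hprev : ∀ y, 0 ≤ y → y ≤ x → envelope (n - 1) y ≤ X * x ^ 2 := fun y hy hyx => by
    rw [← hshift, show 2 * (n - 2) + ((2 : ℕ) : ℤ) = 2 * (n - 1) by push_cast; ring]
    exact envelope_le_zpow hy hyx
  have hcur : envelope n x = X * x ^ 4 := by
    rw [envelope, if_pos hn.le, ← hshift]
    congr 1
    push_cast
    ring
  have h1 := hprev (x - B) (by linarith) (by linarith)
  have h2 : envelope (n - 2) x ≤ X := envelope_le_zpow hx0.le le_rfl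
  have h3 : envelope (n - 2) (x - 2 * B) ≤ X := envelope_le_zpow (by linarith) (by linarith)
  have h4 : envelope n (x - 2 * B) ≤ (x - 2 * B) ^ 2 * (X * x ^ 2) := by
    rw [envelope_eq_sq_mul hn]
    exact mul_le_mul_of_nonneg_left (hprev _ (by linarith) (by linarith)) (sq_nonneg _)
  -- expanded, this says `|c| x² + 2 + 4B² x² ≤ 4B x³`, and `4B x³ ≥ 12B² x²` since `x ≥ 3B`
  have key : |c| * x ^ 2 + 2 + (x - 2 * B) ^ 2 * x ^ 2 ≤ x ^ 4 := by
    have hx2 : 9 ≤ x ^ 2 := by nlinarith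
    have hcube : 3 * B * (4 * B * x ^ 2) ≤ x * (4 * B * x ^ 2) :=
      mul_le_mul_of_nonneg_right hx (by positivity)
    have hB' : 0 ≤ 8 * B ^ 2 - 4 * B := by nlinarith
    nlinarith [mul_le_mul_of_nonneg_right hc (sq_nonneg x), mul_le_mul_of_nonneg_left hx2 hB']
  rw [hcur]
  nlinarith [mul_le_mul_of_nonneg_left h1 (abs_nonneg c), mul_le_mul_of_nonneg_left key hXpos.le]

theorem abs_mul_sub_sub_sub_le (c x y z w : ℝ) :
    |c * x - y - z - w| ≤ |c| * |x| + |y| + |z| + |w| := by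
  rw [← abs_mul]
  linarith [abs_sub (c * x - y - z) w, abs_sub (c * x - y) z, abs_sub (c * x) y]

namespace IsDeltaExtension

variable {c : ℤ × ℤ → ℝ} {a k k' s : ℤ} {f : ℤ × ℤ → ℝ}

theorem eq_zero_of_fst_lt (hf : IsDeltaExtension c a k k' s f) :
    ∀ p ∈ tiltedRect 1 a (k - 1) k', p.1 < s → f p = 0 := by
  refine tiltedRect_induction (fun p hp hps => ?_) fun σ τ hi h1 h2 h3 h4 hσs => ?_
  · rw [hf.boundary p hp, if_neg]
    rintro rfl
    exact lt_irrefl _ hps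
  · rw [hf.step σ τ hi, h1 (by simp only; omega), h2 (by simp only; omega),
      h3 (by simp only; omega), h4 hσs]
    ring

theorem abs_le_envelope (hf : IsDeltaExtension c a k k' s f) {B : ℝ} (hB : 1 ≤ B)
    (hc : ∀ p, |c p| ≤ 4 * B) :
    ∀ p ∈ tiltedRect 1 a (k - 1) k', |f p| ≤ envelope (p.1 - s) (B * (p.2 - k + 2)) := by
  refine tiltedRect_induction (fun p hp => ?_) fun σ τ hi h1 h2 h3 h4 => ?_
  · rw [hf.boundary p hp]
    split_ifs with hps
    · simp [hps, envelope]
    · simpa using envelope_nonneg _ _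
  · have hτ : k + 1 ≤ τ := by rw [mem_tiltedRect_iff] at hi; omega
    dsimp only at h1 h2 h3 h4 ⊢
    rw [hf.step σ τ hi]
    refine (abs_mul_sub_sub_sub_le _ _ _ _ _).trans ?_
    refine le_trans ?_ (envelope_step hB (x := B * (τ - k + 2)) ?_ (hc (σ - 1, τ - 1)) (σ - s))
    · gcongr
      · exact h1.trans_eq (congr_arg₂ envelope (by ring) (by push_cast; ring))
      · exact h2.trans_eq (congr_arg₂ envelope (by ring) rfl)
      · exact h3.trans_eq (congr_arg₂ envelope (by ring) (by push_cast; ring))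
      · exact h4.trans_eq (congr_arg₂ envelope rfl (by push_cast; ring))
    · have : (k : ℝ) + 1 ≤ τ := by exact_mod_cast hτ
      nlinarith

theorem abs_apply_fst_eq_one (hf : IsDeltaExtension c a k k' s f) (hs : 3 ≤ s)
    (hsk : Even (s - k)) : ∀ p ∈ tiltedRect 1 a (k - 1) k', p.1 = s → |f p| = 1 := by
  rw [Int.even_iff] at hsk
  refine tiltedRect_induction (fun p hp hps => ?_) fun σ τ hi h1 h2 h3 h4 hσs => ?_
  · obtain ⟨σ, τ⟩ := p
    have hp' : (σ, τ) = (s, k) := by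
      simp only [mem_westBoundary_iff, mem_tiltedRect_iff] at hp hps
      simp only [Prod.mk.injEq]
      omega
    rw [hp'] at hp ⊢
    simp [hf.boundary _ hp]
  · simp only at hσs
    subst hσs
    rw [mem_tiltedRect_iff] at hi
    rw [hf.step σ τ (mem_tiltedRect_iff.2 hi),
      hf.eq_zero_of_fst_lt _ (mem_tiltedRect_iff.2 (by omega)) (by simp),
      hf.eq_zero_of_fst_lt _ (mem_tiltedRect_iff.2 (by omega)) (by simp),
      hf.eq_zero_of_fst_lt _ (mem_tiltedRect_iff.2 (by omega)) (by simp)]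
    simpa using h4 rfl

end IsDeltaExtension

theorem sum_two_zpow_sub_le {T : Finset ℤ} {i j : ℤ} (hji : j ≤ i) (hT : ∀ l ∈ T, j ≤ l ∧ l < i) :
    ∑ l ∈ T, (2 : ℝ) ^ (l - j) ≤ 2 ^ (i - j) - 1 := by
  have hinj : Set.InjOn (fun l => (l - j).toNat) T := fun l hl l' hl' h => by
    have := (hT l hl).1; have := (hT l' hl').1; simp only at h; omega
  have hlt : ∑ m ∈ T.image (fun l => (l - j).toNat), 2 ^ m < 2 ^ (i - j).toNat :=
    Nat.geomSum_lt le_rfl fun m hm => by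
      obtain ⟨l, hl, rfl⟩ := mem_image.1 hm
      have := hT l hl; omega
  have hexp : ∀ l, j ≤ l → (2 : ℝ) ^ (l - j) = 2 ^ (l - j).toNat := fun l hl => by
    rw [← zpow_natCast, Int.toNat_of_nonneg (by omega)]
  rw [sum_congr rfl fun l hl => hexp l (hT l hl).1, hexp i hji, ← sum_image hinj]
  have hle : ((∑ m ∈ T.image (fun l => (l - j).toNat), 2 ^ m : ℕ) : ℝ) + 1 ≤ 2 ^ (i - j).toNat := by
    exact_mod_cast Nat.succ_le_of_lt hlt
  push_cast at hle
  linarith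

theorem Matrix.IsLowerTriangular.isUnit_of_abs_diag_eq_one {ι : Type*} [Fintype ι] [LinearOrder ι]
    [DecidableEq ι] {A : Matrix ι ι ℝ} (hA : A.IsLowerTriangular) (hdiag : ∀ i, |A i i| = 1) :
    IsUnit A := by
  rw [Matrix.isUnit_iff_isUnit_det, Matrix.det_of_isLowerTriangular A hA, isUnit_iff_ne_zero,
    ← abs_ne_zero, abs_prod]
  simp [hdiag]

theorem Matrix.IsLowerTriangular.abs_inv_apply_le {S : Finset ℤ} {A : Matrix S S ℝ} {K : ℝ}
    (hK : 0 < K) (hA : A.IsLowerTriangular) (hdiag : ∀ i, |A i i| = 1)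
    (hoff : ∀ i j, j < i → |A i j| ≤ K ^ ((i : ℤ) - j)) (i j : S) :
    |A⁻¹ i j| ≤ (2 * K) ^ ((i : ℤ) - j) := by
  have hunit := hA.isUnit_of_abs_diag_eq_one hdiag
  have : Invertible A := hunit.invertible
  have hinv : A⁻¹.IsLowerTriangular := Matrix.blockTriangular_inv_of_blockTriangular hA
  induction i using WellFoundedLT.induction with
  | _ i ih =>
  rcases lt_or_ge i j with hij | hji
  · rw [hinv hij, abs_zero]
    positivity
  have hrow : A i i * A⁻¹ i j + ∑ l ∈ Ico j i, A i l * A⁻¹ l j = (1 : Matrix S S ℝ) i j := by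
    rw [← A.mul_inv_of_invertible, Matrix.mul_apply, ← sum_subset (subset_univ (Icc j i)),
      ← Ico_insert_right hji, sum_insert right_notMem_Ico]
    intro l _ hl
    rw [mem_Icc, not_and_or, not_le, not_le] at hl
    rcases hl with h | h
    · rw [hinv h, mul_zero]
    · rw [hA h, zero_mul]
  rcases hji.eq_or_lt with rfl | hji
  · rw [Ico_self, sum_empty, add_zero, Matrix.one_apply_eq] at hrow
    have := congrArg abs hrow
    rw [abs_mul, hdiag, one_mul, abs_one] at this
    simp [this]
  rw [Matrix.one_apply_ne hji.ne', ← eq_neg_iff_add_eq_zero] at hrow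
  calc |A⁻¹ i j| = |∑ l ∈ Ico j i, A i l * A⁻¹ l j| := by
        rw [← one_mul |A⁻¹ i j|, ← hdiag i, ← abs_mul, hrow, abs_neg]
    _ ≤ ∑ l ∈ Ico j i, K ^ ((i : ℤ) - l) * (2 * K) ^ ((l : ℤ) - j) := by
        refine (abs_sum_le_sum_abs _ _).trans (sum_le_sum fun l hl => ?_)
        rw [mem_Ico] at hl
        rw [abs_mul]
        exact mul_le_mul (hoff i l hl.2) (ih l hl.2) (abs_nonneg _) (by positivity)
    _ = K ^ ((i : ℤ) - j) * ∑ l ∈ (Ico j i).map (Function.Embedding.subtype _),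
          (2 : ℝ) ^ (l - j) := by
        rw [sum_map, mul_sum]
        refine sum_congr rfl fun l _ => ?_
        rw [Function.Embedding.coe_subtype, mul_zpow, mul_left_comm, ← zpow_add₀ hK.ne',
          sub_add_sub_cancel, mul_comm]
    _ ≤ K ^ ((i : ℤ) - j) * (2 ^ ((i : ℤ) - j) - 1) := by
        refine mul_le_mul_of_nonneg_left (sum_two_zpow_sub_le (by exact_mod_cast hji.le) ?_)
          (by positivity)
        intro l hl
        obtain ⟨m, hm, rfl⟩ := mem_map.1 hl
        rw [mem_Ico] at hm
        exact ⟨hm.1, hm.2⟩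
    _ ≤ (2 * K) ^ ((i : ℤ) - j) := by
        rw [mul_zpow]
        nlinarith [zpow_pos hK ((i : ℤ) - j)]

theorem Matrix.l2_opNorm_le_card_mul {n : Type*} [Fintype n] [DecidableEq n] {A : Matrix n n ℝ}
    {c : ℝ} (hc : 0 ≤ c) (hA : ∀ i j, |A i j| ≤ c) :
    ‖Matrix.toEuclideanCLM (𝕜 := ℝ) A‖ ≤ Fintype.card n * c := by
  refine ContinuousLinearMap.opNorm_le_bound _ (by positivity) fun x => ?_
  have hrow : ∀ i, |(A.mulVec x.ofLp) i| ≤ c * ∑ j, |x j| := fun i => by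
    rw [Matrix.mulVec, dotProduct, mul_sum]
    refine (abs_sum_le_sum_abs _ _).trans (sum_le_sum fun j _ => ?_)
    rw [abs_mul]
    exact mul_le_mul_of_nonneg_right (hA i j) (abs_nonneg _)
  have hcs : (∑ j, |x j|) ^ 2 ≤ Fintype.card n * ‖x‖ ^ 2 := by
    simpa [EuclideanSpace.norm_sq_eq] using
      sq_sum_le_card_mul_sum_sq (s := univ) (f := fun j => |x j|)
  refine (pow_le_pow_iff_left₀ (norm_nonneg _) (by positivity) two_ne_zero).1 ?_
  calc ‖Matrix.toEuclideanCLM (𝕜 := ℝ) A x‖ ^ 2 = ∑ i, |(A.mulVec x.ofLp) i| ^ 2 := by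
        simp [EuclideanSpace.norm_sq_eq]
    _ ≤ ∑ _i : n, (c * ∑ j, |x j|) ^ 2 :=
        sum_le_sum fun i _ => pow_le_pow_left₀ (abs_nonneg _) (hrow i) 2
    _ = Fintype.card n * c ^ 2 * (∑ j, |x j|) ^ 2 := by
        rw [sum_const, card_univ, nsmul_eq_mul]
        ring
    _ ≤ Fintype.card n * c ^ 2 * (Fintype.card n * ‖x‖ ^ 2) := by gcongr
    _ = (Fintype.card n * c * ‖x‖) ^ 2 := by ring

theorem Finset.card_le_of_forall_mem_Icc {S : Finset ℤ} {m n : ℤ}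
    (h : ∀ s ∈ S, m ≤ s ∧ s ≤ n) : S.card ≤ (n + 1 - m).toNat :=
  Int.card_Icc m n ▸ card_le_card fun s hs => mem_Icc.2 (h s hs)

def transferMatrix (u : ℤ → ℤ × ℤ → ℝ) (k' : ℤ) (S : Finset ℤ) : Matrix S S ℝ :=
  Matrix.of fun i j => u j (i, k')

theorem transferMatrix_isUnit_and_abs_inv_apply_le {c : ℤ × ℤ → ℝ} {a k k' : ℤ}
    {u : ℤ → ℤ × ℤ → ℝ} {S : Finset ℤ} {B : ℝ} (hB : 1 ≤ B) (hc : ∀ p, |c p| ≤ 4 * B)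
    (hkk' : k < k') (hpar : Even (k' - k)) (hS : ∀ s ∈ S, 3 ≤ s ∧ s ≤ a ∧ Even (s - k'))
    (hu : ∀ s ∈ S, IsDeltaExtension c a k k' s (u s)) :
    IsUnit (transferMatrix u k' S) ∧ ∀ i j,
      |(transferMatrix u k' S)⁻¹ i j| ≤ (2 * (B * (k' - k + 2)) ^ 2) ^ ((i : ℤ) - j) := by
  have hmem : ∀ i : S, ((i : ℤ), k') ∈ tiltedRect 1 a (k - 1) k' := fun i => by
    obtain ⟨h3, ha, hev⟩ := hS i i.2
    rw [Int.even_iff] at hev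
    rw [mem_tiltedRect_iff]
    omega
  have hlower : (transferMatrix u k' S).IsLowerTriangular := fun i j (hij : i < j) =>
    (hu j j.2).eq_zero_of_fst_lt _ (hmem i) hij
  have hdiag : ∀ i, |transferMatrix u k' S i i| = 1 := fun i =>
    (hu i i.2).abs_apply_fst_eq_one (hS i i.2).1 (by simpa using (hS i i.2).2.2.add hpar)
      _ (hmem i) rfl
  have hoff : ∀ i j : S, j < i →
      |transferMatrix u k' S i j| ≤ ((B * (k' - k + 2)) ^ 2) ^ ((i : ℤ) - j) := fun i j hji => by
    have := (hu j j.2).abs_le_envelope hB hc _ (hmem i)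
    rwa [envelope, if_pos (sub_nonneg.2 (Subtype.coe_le_coe.2 hji.le)), zpow_mul,
      zpow_ofNat] at this
  have hK : 0 < (B * (k' - k + 2)) ^ 2 := by
    have : (k : ℝ) < k' := by exact_mod_cast hkk'
    have : 0 < B * (k' - k + 2) := mul_pos (by linarith) (by linarith)
    positivity
  exact ⟨hlower.isUnit_of_abs_diag_eq_one hdiag, hlower.abs_inv_apply_le hK hdiag hoff⟩

/-- Inverse bound for restricted transfer operators: there is a
constant `C₁` (the constant in the entry bounds of the transfer operator) such that,
with `λ₀ ∈ [0,8]`, `V̄ > 2`, `V : ℤ² → {0,V̄}`, `0 < k < k'` of the same parity, the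
transfer matrix `M^{k,k'}_{[1,a]}` (whose column at `s` is the value on the row `t = k'`
of the extension `u s` of the boundary data `δ_{(s,k)}`), restricted to rows
`S₁ ⊆ R_{[4,a-1],{k'}}` and the corresponding columns `S₂ = {(s,k) : (s,k') ∈ S₁}`,
is invertible and satisfies `‖(P_{S₁} M I_{S₂})⁻¹‖ ≤ a(2V̄(k'-k+2))^{2C₁a}`. -/
theorem restricted_transfer_operator_inverse_bound :
    ∃ C₁ : ℕ, 0 < C₁ ∧
      ∀ (lam Vbar : ℝ) (V : ℤ × ℤ → ℝ) (a k k' : ℤ),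
        0 ≤ lam → lam ≤ 8 → 2 < Vbar → (∀ p, V p = 0 ∨ V p = Vbar) →
        0 < k → k < k' → Even (k' - k) → 0 < a →
        ∀ u : ℤ → ℤ × ℤ → ℝ,
          (∀ s : ℤ, Even (s - k) →
            (∀ p ∈ westBoundary 1 a (k - 1) k',
              u s p = if p = (s, k) then (1 : ℝ) else 0) ∧
            (∀ σ τ : ℤ, (σ - 1, τ - 1) ∈ tiltedRect 2 (a - 1) k (k' - 1) →
              u s (σ, τ) = (4 + V (σ - 1, τ - 1) - lam) * u s (σ - 1, τ - 1)
                - u s (σ - 2, τ) - u s (σ - 2, τ - 2) - u s (σ, τ - 2))) →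
          ∀ S : Finset ℤ, (∀ s ∈ S, 4 ≤ s ∧ s ≤ a - 1 ∧ Even (s - k')) →
            ∀ M : Matrix S S ℝ,
              (M = Matrix.of fun s' s => u s.1 (s'.1, k')) →
              IsUnit M ∧
              ‖Matrix.toEuclideanCLM (𝕜 := ℝ) M⁻¹‖ ≤
                (a : ℝ) * (2 * Vbar * ((k' : ℝ) - k + 2)) ^ (2 * (C₁ : ℤ) * a) := by
  refine ⟨1, one_pos, ?_⟩
  intro lam Vbar V a k k' hlam0 hlam8 hVbar hV hk hkk' hpar ha u hu S hS M hM
  subst hM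
  have hcoef : ∀ p, |4 + V p - lam| ≤ 4 * Vbar := fun p => by
    rcases hV p with h | h <;> rw [h, abs_le] <;> constructor <;> linarith
  have hsol : ∀ s ∈ S, IsDeltaExtension (fun p => 4 + V p - lam) a k k' s (u s) := fun s hs =>
    have h := hu s (by simpa using (hS s hs).2.2.add hpar)
    ⟨h.1, h.2⟩
  obtain ⟨hunit, hentry⟩ := transferMatrix_isUnit_and_abs_inv_apply_le (B := Vbar) (by linarith)
    hcoef hkk' hpar (fun s hs => ⟨by linarith [(hS s hs).1], by linarith [(hS s hs).2.1],
      (hS s hs).2.2⟩) hsol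
  refine ⟨hunit, ?_⟩
  set x := Vbar * ((k' : ℝ) - k + 2) with hx
  have hx6 : 6 ≤ x := by
    have : (k : ℝ) + 1 ≤ k' := by exact_mod_cast hkk'
    nlinarith
  have hK : 1 ≤ 2 * x ^ 2 := by nlinarith
  have hcard : (Fintype.card S : ℝ) ≤ a := by
    have := Finset.card_le_of_forall_mem_Icc fun s hs => And.intro (hS s hs).1 (hS s hs).2.1
    rw [Fintype.card_coe]
    exact_mod_cast (show (S.card : ℤ) ≤ a by omega)
  calc ‖Matrix.toEuclideanCLM (𝕜 := ℝ) (transferMatrix u k' S)⁻¹‖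
      ≤ Fintype.card S * (2 * x ^ 2) ^ a := Matrix.l2_opNorm_le_card_mul (by positivity) fun i j =>
        (hentry i j).trans (zpow_le_zpow_right₀ hK (by linarith [(hS i i.2).2.1, (hS j j.2).1]))
    _ ≤ a * (2 * Vbar * ((k' : ℝ) - k + 2)) ^ (2 * ((1 : ℕ) : ℤ) * a) := by
      have hsq : (2 * Vbar * ((k' : ℝ) - k + 2)) ^ (2 : ℤ) = 4 * x ^ 2 := by
        rw [zpow_two, hx]; ring
      rw [Nat.cast_one, mul_one, zpow_mul, hsq]
      gcongr
      exact zpow_le_zpow_left₀ ha.le (by positivity) (by nlinarith)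
end
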